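/- arXiv:1601.04946 — 10 statements merged into one kernel-verified Lean document; each statement's English description precedes it below -/
import Mathlib

section
/- Let d and m be positive integers with d > 1, and define a_n = 2^{2^n} + d. Suppose that gcd(a_k, a_l) ≤ m for all distinct positive integers k and l. Then for every prime p, the sequence n ↦ ν_p(a_n) is bounded. -/
theorem stmt_4 (d m : ℕ) (hd : 1 < d) (hm : 0 < m)
    (h : ∀ k l : ℕ, 0 < k → 0 < l → k ≠ l →
      Nat.gcd (2 ^ 2 ^ k + d) (2 ^ 2 ^ l + d) ≤ m) :
    ∀ p : ℕ, p.Prime → ∃ B : ℕ, ∀ n : ℕ,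
      padicValNat p (2 ^ 2 ^ n + d) ≤ B := by
  intro p hp
  haveI : Fact p.Prime := ⟨hp⟩
  haveI : Fact (Nat.Prime 2) := ⟨Nat.prime_two⟩
  have hd0 : d ≠ 0 := by omega
  have hane : ∀ n : ℕ, 2 ^ 2 ^ n + d ≠ 0 := fun n => by positivity
  by_cases hp2 : p = 2
  · subst hp2
    refine ⟨(Finset.range (d + 1)).sup (fun n => padicValNat 2 (2 ^ 2 ^ n + d)) ⊔ d,
      fun n => ?_⟩
    rcases lt_or_ge n (d + 1) with hn | hn
    · exact le_sup_of_le_left (Finset.le_sup (f := fun n => padicValNat 2 (2 ^ 2 ^ n + d)) (Finset.mem_range.2 hn))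
    · refine le_sup_of_le_right ?_
      set v := padicValNat 2 d with hv
      have hvd : v < d :=
        lt_of_lt_of_le (Nat.lt_two_pow_self (n := v)) (Nat.le_of_dvd (by omega) pow_padicValNat_dvd)
      have hnd : d ≤ 2 ^ n :=
        le_of_lt (lt_of_lt_of_le (Nat.lt_two_pow_self (n := d)) (Nat.pow_le_pow_right (by norm_num) (by omega)))
      by_contra hcon
      push_neg at hcon
      have h2 : (2 : ℕ) ^ (v + 1) ∣ 2 ^ 2 ^ n + d :=
        (padicValNat_dvd_iff_le (hane n)).2 (by omega)
      have h3 : (2 : ℕ) ^ (v + 1) ∣ 2 ^ 2 ^ n := pow_dvd_pow 2 (by omega)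
      have h4 : (2 : ℕ) ^ (v + 1) ∣ d := by
        have := Nat.dvd_sub h2 h3
        simpa using this
      exact pow_succ_padicValNat_not_dvd hd0 h4
  · -- p odd
    have hp2le : 2 ≤ p := hp.two_le
    set N0 := padicValNat 2 (p - 1) + 1 with hN0
    refine ⟨(Finset.range N0).sup (fun n => padicValNat p (2 ^ 2 ^ n + d)) ⊔ m, fun n => ?_⟩
    rcases lt_or_ge n N0 with hn | hn
    · exact le_sup_of_le_left (Finset.le_sup (f := fun n => padicValNat p (2 ^ 2 ^ n + d)) (Finset.mem_range.2 hn))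
    refine le_sup_of_le_right ?_
    set t := padicValNat p (2 ^ 2 ^ n + d) with ht
    rcases Nat.eq_zero_or_pos t with h0 | htpos
    · omega
    have hpt1 : 1 < p ^ t := Nat.one_lt_pow (by omega) hp.one_lt
    haveI : Fact (1 < p ^ t) := ⟨hpt1⟩
    haveI : NeZero (p ^ t) := ⟨by omega⟩
    have hdvd : p ^ t ∣ 2 ^ 2 ^ n + d := pow_padicValNat_dvd
    have hcop2p : Nat.Coprime 2 p := (Nat.coprime_primes Nat.prime_two hp).2 (fun e => hp2 e.symm)
    have hcop : Nat.Coprime 2 (p ^ t) := Nat.Coprime.pow_right _ hcop2p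
    set u : (ZMod (p ^ t))ˣ := ZMod.unitOfCoprime 2 hcop with hu
    set o := orderOf u with ho
    have ho_pos : 0 < o := orderOf_pos u
    set a := padicValNat 2 o with ha
    -- a ≤ padicValNat 2 (p-1)
    have htot : Nat.totient (p ^ t) = p ^ (t - 1) * (p - 1) := Nat.totient_prime_pow hp htpos
    have hocard : o ∣ Nat.totient (p ^ t) := by
      rw [← ZMod.card_units_eq_totient]
      exact orderOf_dvd_card
    have hvp : padicValNat 2 (p ^ (t - 1) * (p - 1)) = padicValNat 2 (p - 1) := by
      have h1 : ¬ (2 ∣ p ^ (t - 1)) := fun hdd => hp2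
        ((Nat.prime_dvd_prime_iff_eq Nat.prime_two hp).1
          (Nat.Prime.dvd_of_dvd_pow Nat.prime_two hdd)).symm
      rw [padicValNat.mul (by positivity) (by omega)]
      rw [padicValNat.eq_zero_of_not_dvd h1, zero_add]
    have ha_le : a ≤ padicValNat 2 (p - 1) := by
      have h2a : (2 : ℕ) ^ a ∣ o := pow_padicValNat_dvd
      have h2b : (2 : ℕ) ^ a ∣ p ^ (t - 1) * (p - 1) := (h2a.trans hocard).trans (htot ▸ dvd_refl _)
      have := (padicValNat_dvd_iff_le
        (Nat.mul_ne_zero (pow_ne_zero _ (by omega)) (by omega) : p ^ (t - 1) * (p - 1) ≠ 0)).1 h2b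
      omega
    have han : a ≤ n := by omega
    -- decompose o = 2^a * b with b odd
    obtain ⟨b, hb⟩ : (2 : ℕ) ^ a ∣ o := pow_padicValNat_dvd
    have hb_pos : 0 < b := by
      rcases Nat.eq_zero_or_pos b with rfl | hbp
      · simp at hb; omega
      · exact hbp
    have hb_odd : ¬ (2 ∣ b) := by
      intro hdd
      have : (2 : ℕ) ^ (a + 1) ∣ o := by
        rcases hdd with ⟨c, hc⟩
        exact ⟨c, by rw [hb, hc]; ring⟩
      have := (padicValNat_dvd_iff_le (by omega : o ≠ 0)).1 this
      omega
    have hcop2b : Nat.Coprime 2 b := (Nat.Prime.coprime_iff_not_dvd Nat.prime_two).2 hb_odd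
    -- gcd o (2^n) = 2^a
    have hgcd : Nat.gcd o (2 ^ n) = 2 ^ a := by
      have h1 : (2 : ℕ) ^ n = 2 ^ a * 2 ^ (n - a) := by rw [← pow_add]; congr 1; omega
      rw [hb, h1, Nat.gcd_mul_left]
      have : Nat.gcd b (2 ^ (n - a)) = 1 := Nat.Coprime.pow_right _ hcop2b.symm
      rw [this, mul_one]
    -- order of u ^ 2^n is b
    set w := u ^ 2 ^ n with hw
    have how : orderOf w = b := by
      rw [hw, orderOf_pow, ← ho, hgcd, hb, Nat.mul_div_cancel_left _ (by positivity)]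
    set c := Nat.totient b with hc
    have hc_pos : 0 < c := Nat.totient_pos.2 hb_pos
    have heuler : b ∣ 2 ^ c - 1 := by
      have h1 := Nat.ModEq.pow_totient hcop2b
      have h2 : (1 : ℕ) ≤ 2 ^ c := Nat.one_le_two_pow
      exact (Nat.modEq_iff_dvd' h2).1 h1.symm
    have hw1 : w ^ (2 ^ c - 1) = 1 := by
      rw [← how] at heuler
      exact orderOf_dvd_iff_pow_eq_one.1 heuler
    have hwc : w ^ 2 ^ c = w := by
      have : (2 : ℕ) ^ c = (2 ^ c - 1) + 1 := by
        have : (1 : ℕ) ≤ 2 ^ c := Nat.one_le_two_pow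
        omega
      rw [this, pow_add, hw1, one_mul, pow_one]
    have hkey : u ^ 2 ^ (n + c) = u ^ 2 ^ n := by
      rw [pow_add, pow_mul, ← hw, hwc, hw]
    -- descend to ZMod (p^t)
    have hkey2 : (2 : ZMod (p ^ t)) ^ 2 ^ (n + c) = (2 : ZMod (p ^ t)) ^ 2 ^ n := by
      have := congrArg (Units.val) hkey
      push_cast at this
      rw [hu] at this
      simpa [ZMod.coe_unitOfCoprime] using this
    have hzero : ((2 ^ 2 ^ n + d : ℕ) : ZMod (p ^ t)) = 0 :=
      (ZMod.natCast_eq_zero_iff _ _).2 hdvd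
    have hdvd2 : p ^ t ∣ 2 ^ 2 ^ (n + c) + d := by
      rw [← ZMod.natCast_eq_zero_iff]
      push_cast at hzero ⊢
      rw [hkey2, hzero]
    -- apply hypothesis
    have hle : p ^ t ≤ m := by
      have hg : p ^ t ∣ Nat.gcd (2 ^ 2 ^ n + d) (2 ^ 2 ^ (n + c) + d) :=
        Nat.dvd_gcd hdvd hdvd2
      have := h n (n + c) (by omega) (by omega) (by omega)
      exact le_trans (Nat.le_of_dvd (Nat.gcd_pos_of_pos_left _ (by positivity)) hg) this
    have h2t : t < p ^ t :=
      lt_of_lt_of_le (Nat.lt_two_pow_self (n := t)) (Nat.pow_le_pow_left hp.two_le t)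
    omega
end

section
/- Let d, m be positive integers with d > 1, set a_n = 2^{2^n} + d, and assume gcd(a_k, a_l) ≤ m for all distinct positive integers k, l. If p is a prime with p > m and p divides a_n for some positive integer n, then p ≡ 1 (mod 2^n). -/
theorem stmt_5 (d m : ℕ) (hd : 1 < d) (hm : 0 < m)
    (h : ∀ k l : ℕ, 0 < k → 0 < l → k ≠ l →
      Nat.gcd (2 ^ 2 ^ k + d) (2 ^ 2 ^ l + d) ≤ m)
    (p n : ℕ) (hp : p.Prime) (hpm : p > m) (hn : 0 < n)
    (hdvd : p ∣ 2 ^ 2 ^ n + d) :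
    p % 2 ^ n = 1 := by
  -- p is odd
  have hp2 : p ≠ 2 := by
    intro hpe
    subst hpe
    have hm1 : m = 1 := by omega
    have h2 : (2:ℕ) ∣ 2 ^ 2 ^ n := dvd_pow_self 2 (by positivity)
    obtain ⟨c, hc⟩ := h2
    obtain ⟨q, hq⟩ := hdvd
    have hdeven : 2 ∣ d := by omega
    have h12 := h 1 2 one_pos two_pos (by norm_num)
    have hdg : (2:ℕ) ∣ Nat.gcd (2 ^ 2 ^ 1 + d) (2 ^ 2 ^ 2 + d) :=
      Nat.dvd_gcd (by omega) (by omega)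
    have := Nat.le_of_dvd (Nat.gcd_pos_of_pos_left _ (by positivity)) hdg
    omega
  have hp3 : 3 ≤ p := by
    have h2le := hp.two_le
    omega
  haveI : Fact p.Prime := ⟨hp⟩
  suffices hdiv : 2 ^ n ∣ p - 1 by
    obtain ⟨c, hc⟩ := hdiv
    have h2n : 2 ≤ 2 ^ n := by
      calc (2:ℕ) = 2 ^ 1 := rfl
      _ ≤ 2 ^ n := Nat.pow_le_pow_right (by norm_num) hn
    have hpc : p = 2 ^ n * c + 1 := by omega
    rw [hpc, Nat.mul_add_mod]
    exact Nat.mod_eq_of_lt (by omega)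
  by_contra hnd
  set t := orderOf (2 : ZMod p) with ht
  have h2ne : (2 : ZMod p) ≠ 0 := by
    intro h0
    have h0' : ((2:ℕ) : ZMod p) = 0 := by exact_mod_cast h0
    rw [ZMod.natCast_eq_zero_iff] at h0'
    exact hp2 ((Nat.prime_dvd_prime_iff_eq hp Nat.prime_two).mp h0')
  have htdvd : t ∣ p - 1 := ZMod.orderOf_dvd_card_sub_one h2ne
  have htpos : 0 < t := Nat.pos_of_dvd_of_pos htdvd (by omega)
  set a := t.factorization 2 with ha
  set b := t / 2 ^ a with hb
  have hab : 2 ^ a * b = t := Nat.ordProj_mul_ordCompl_eq_self t 2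
  have hbodd : ¬ 2 ∣ b := Nat.not_dvd_ordCompl Nat.prime_two htpos.ne'
  have hbpos : 0 < b := Nat.ordCompl_pos 2 htpos.ne'
  have han : a ≤ n := by
    by_contra hle
    push_neg at hle
    exact hnd (dvd_trans (pow_dvd_pow 2 hle.le)
      (dvd_trans ⟨b, hab.symm⟩ htdvd))
  set e := b.totient with he
  have hepos : 0 < e := Nat.totient_pos.mpr hbpos
  have hcop : Nat.Coprime 2 b := (Nat.Prime.coprime_iff_not_dvd Nat.prime_two).mpr hbodd
  have hmod : 2 ^ e ≡ 1 [MOD b] := Nat.ModEq.pow_totient hcop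
  have h2e : 1 ≤ 2 ^ e := Nat.one_le_two_pow
  have hbdvd : b ∣ 2 ^ e - 1 := (Nat.modEq_iff_dvd' h2e).mp hmod.symm
  have htdvd2 : t ∣ 2 ^ (n + e) - 2 ^ n := by
    have h1 : 2 ^ (n + e) - 2 ^ n = 2 ^ n * (2 ^ e - 1) := by
      rw [Nat.mul_sub, mul_one, ← pow_add]
    rw [h1, ← hab]
    exact mul_dvd_mul (pow_dvd_pow 2 han) hbdvd
  obtain ⟨s, hs⟩ := htdvd2
  have hle : 2 ^ n ≤ 2 ^ (n + e) := Nat.pow_le_pow_right (by norm_num) (by omega)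
  have hsum : 2 ^ (n + e) = 2 ^ n + t * s := by omega
  have hkey : (2 : ZMod p) ^ 2 ^ (n + e) = (2 : ZMod p) ^ 2 ^ n := by
    rw [hsum, pow_add, pow_mul, pow_orderOf_eq_one, one_pow, mul_one]
  have hdvd' : p ∣ 2 ^ 2 ^ (n + e) + d := by
    have h0 : ((2 ^ 2 ^ n + d : ℕ) : ZMod p) = 0 := by
      rw [ZMod.natCast_eq_zero_iff]; exact hdvd
    have h1 : ((2 ^ 2 ^ (n + e) + d : ℕ) : ZMod p) = 0 := by
      push_cast at h0 ⊢
      rw [hkey]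
      exact h0
    rwa [ZMod.natCast_eq_zero_iff] at h1
  have hgcd := h n (n + e) hn (by omega) (by omega)
  have hpg : p ∣ Nat.gcd (2 ^ 2 ^ n + d) (2 ^ 2 ^ (n + e) + d) :=
    Nat.dvd_gcd hdvd hdvd'
  have := Nat.le_of_dvd (Nat.gcd_pos_of_pos_left _ (by positivity)) hpg
  omega
end

section
/- Let p be an odd prime and n a positive integer with 2^n not dividing p - 1. Then there exists a positive integer l > n such that p divides 2^{2^l} - 2^{2^n}. -/
theorem stmt_6 (p n : ℕ) (hp : p.Prime) (hodd : Odd p) (hn : 0 < n)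
    (h : ¬ (2 ^ n ∣ p - 1)) :
    ∃ l : ℕ, l > n ∧ p ∣ 2 ^ 2 ^ l - 2 ^ 2 ^ n := by
  have hp1 : 0 < p - 1 := by
    have := hp.two_le
    omega
  set a := (p - 1).factorization 2 with ha
  set m := (p - 1) / 2 ^ a with hm
  have hdecomp : 2 ^ a * m = p - 1 := Nat.ordProj_mul_ordCompl_eq_self (p - 1) 2
  have hmodd : ¬ 2 ∣ m := Nat.not_dvd_ordCompl Nat.prime_two hp1.ne'
  have hmpos : 0 < m := Nat.ordCompl_pos 2 hp1.ne'
  have han : a < n := by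
    by_contra hle
    exact h ((Nat.Prime.pow_dvd_iff_le_factorization Nat.prime_two hp1.ne').mpr (by omega))
  have hcop : Nat.Coprime 2 m := (Nat.Prime.coprime_iff_not_dvd Nat.prime_two).mpr hmodd
  -- Euler: m ∣ 2 ^ φ(m) - 1
  have heuler : m ∣ 2 ^ m.totient - 1 :=
    (Nat.modEq_iff_dvd' (Nat.one_le_two_pow)).mp (Nat.ModEq.pow_totient hcop).symm
  set l := n + m.totient with hl
  have hlgt : l > n := by
    have := Nat.totient_pos.mpr hmpos
    omega
  refine ⟨l, hlgt, ?_⟩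
  -- p - 1 ∣ 2^l - 2^n
  have hdvd1 : p - 1 ∣ 2 ^ l - 2 ^ n := by
    have : 2 ^ a * m ∣ 2 ^ n * (2 ^ m.totient - 1) :=
      mul_dvd_mul (pow_dvd_pow 2 han.le) heuler
    have heq : 2 ^ n * (2 ^ m.totient - 1) = 2 ^ l - 2 ^ n := by
      rw [Nat.mul_sub, mul_one, hl, pow_add]
    rwa [hdecomp, heq] at this
  -- Fermat: p ∣ 2 ^ (p-1) - 1
  have hfermat : p ∣ 2 ^ (p - 1) - 1 := by
    have hcp : Nat.Coprime 2 p := (Nat.coprime_two_left).mpr hodd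
    have := Nat.ModEq.pow_totient hcp.symm.symm
    rw [Nat.totient_prime hp] at this
    exact (Nat.modEq_iff_dvd' Nat.one_le_two_pow).mp this.symm
  -- hence p ∣ 2 ^ k - 1 for k = 2^l - 2^n
  obtain ⟨t, ht⟩ := hdvd1
  have hk : p ∣ 2 ^ (2 ^ l - 2 ^ n) - 1 := by
    have : 2 ^ (p - 1) - 1 ∣ (2 ^ (p - 1)) ^ t - 1 ^ t := Nat.sub_dvd_pow_sub_pow _ 1 t
    rw [one_pow, ← pow_mul, ← ht] at this
    exact hfermat.trans this
  have hle : 2 ^ n ≤ 2 ^ l := Nat.pow_le_pow_right (by norm_num) hlgt.le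
  calc p ∣ 2 ^ 2 ^ n * (2 ^ (2 ^ l - 2 ^ n) - 1) := Dvd.dvd.mul_left hk _
    _ = 2 ^ 2 ^ l - 2 ^ 2 ^ n := by
        rw [Nat.mul_sub, mul_one, ← pow_add, Nat.add_sub_cancel' hle]
end

section
/- Let d, m be positive integers with d > 1, set a_n = 2^{2^n} + d, and assume gcd(a_k, a_l) ≤ m for all distinct positive integers k, l. Then d is a power of 2. -/
lemma aux_dvd_pow_sub_one (q N : ℕ) [NeZero q] (hcop : Nat.Coprime 2 q)
    (h : orderOf (ZMod.unitOfCoprime 2 hcop) ∣ N) : q ∣ 2 ^ N - 1 := by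
  have hu : (ZMod.unitOfCoprime 2 hcop) ^ N = 1 := orderOf_dvd_iff_pow_eq_one.mp h
  have h2 : ((2 : ℕ) : ZMod q) ^ N = 1 := by
    have := congrArg (Units.val) hu
    simpa [ZMod.coe_unitOfCoprime] using this
  have h3 : ((2 ^ N : ℕ) : ZMod q) = ((1 : ℕ) : ZMod q) := by push_cast; simpa using h2
  have h4 : 2 ^ N ≡ 1 [MOD q] := (ZMod.natCast_eq_natCast_iff _ _ _).mp h3
  exact (Nat.modEq_iff_dvd' Nat.one_le_two_pow).mp h4.symm

theorem stmt_7 (d m : ℕ) (hd : 1 < d) (hm : 0 < m)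
    (h : ∀ k l : ℕ, 0 < k → 0 < l → k ≠ l →
      Nat.gcd (2 ^ 2 ^ k + d) (2 ^ 2 ^ l + d) ≤ m) :
    ∃ k : ℕ, d = 2 ^ k := by
  classical
  by_contra hpow
  push_neg at hpow
  have hd0 : d ≠ 0 := by omega
  obtain ⟨s, t, hdt, ht2⟩ : ∃ s t : ℕ, 2 ^ s * t = d ∧ ¬ 2 ∣ t :=
    ⟨d.factorization 2, d / 2 ^ d.factorization 2,
      Nat.ordProj_mul_ordCompl_eq_self d 2, Nat.not_dvd_ordCompl Nat.prime_two hd0⟩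
  have ht0 : t ≠ 0 := by intro h0; rw [h0, Nat.mul_zero] at hdt; omega
  have ht1 : t ≠ 1 := by
    intro h1; exact hpow s (by rw [← hdt, h1, mul_one])
  -- choose parameters
  set j := t + m ^ (m + 1) with hj
  have hj1 : 1 ≤ j := by omega
  set k := s + j with hk
  have hk2 : s + j < 2 ^ k := by rw [hk]; exact Nat.lt_two_pow_self
  set e := 2 ^ k - s with he
  have hek : 2 ^ k = s + e := by omega
  have hej : j + 1 ≤ e := by omega
  set b := 2 ^ e + t with hb
  have hb0 : b ≠ 0 := by positivity
  have hab : 2 ^ 2 ^ k + d = 2 ^ s * b := by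
    rw [hek, pow_add, hb, Nat.mul_add, hdt]
  have hbodd : ¬ 2 ∣ b := by
    intro h2b
    have h2e : (2:ℕ) ∣ 2 ^ e := dvd_pow_self 2 (by omega)
    omega
  have htj : t < 2 ^ j := lt_of_le_of_lt (by omega) (Nat.lt_two_pow_self (n := j))
  have h1j : (1:ℕ) < 2 ^ j := Nat.one_lt_two_pow_iff.mpr (by omega)
  have hbt : b % 2 ^ j = t := by
    obtain ⟨w, hw⟩ : (2:ℕ) ^ j ∣ 2 ^ e := pow_dvd_pow 2 (by omega)
    rw [hb, hw, Nat.mul_add_mod]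
    exact Nat.mod_eq_of_lt htj
  by_cases hA : ∃ p E : ℕ, p.Prime ∧ p ^ E ∣ b ∧ p % 2 ^ j ≠ 1 ∧ m < p ^ E
  · -- main branch: build the big gcd
    obtain ⟨p, E, hp, hpEb, hp1, hpEm⟩ := hA
    have hE : E ≠ 0 := by rintro rfl; simp at hpEm; omega
    set q := p ^ E with hq
    have hqb : q ∣ b := hpEb
    have hpodd : ¬ 2 ∣ p :=
      fun h2p => hbodd (dvd_trans h2p (dvd_trans (dvd_pow_self p hE) hqb))
    have hc2p : Nat.Coprime 2 p := (Nat.Prime.coprime_iff_not_dvd Nat.prime_two).mpr hpodd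
    have hcopq : Nat.Coprime 2 q := hc2p.pow_right E
    haveI : NeZero q := ⟨pow_ne_zero E hp.pos.ne'⟩
    set u := ZMod.unitOfCoprime 2 hcopq with hu
    set r := orderOf u with hr
    have hr0 : 0 < r := orderOf_pos u
    have hrphi : r ∣ q.totient := orderOf_dvd_of_pow_eq_one (ZMod.pow_totient u)
    have hphi : q.totient = p ^ (E - 1) * (p - 1) :=
      Nat.totient_prime_pow hp (Nat.pos_of_ne_zero hE)
    obtain ⟨α, β, hrab, hβodd⟩ : ∃ α β : ℕ, 2 ^ α * β = r ∧ ¬ 2 ∣ β :=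
      ⟨r.factorization 2, r / 2 ^ r.factorization 2,
        Nat.ordProj_mul_ordCompl_eq_self r 2, Nat.not_dvd_ordCompl Nat.prime_two hr0.ne'⟩
    have hβ0 : β ≠ 0 := by intro h0; rw [h0, Nat.mul_zero] at hrab; omega
    have h2α : 2 ^ α ∣ p - 1 := by
      have hdr : (2:ℕ) ^ α ∣ r := ⟨β, hrab.symm⟩
      have hd2 := hdr.trans hrphi
      rw [hphi] at hd2
      exact (hc2p.pow α (E-1)).dvd_of_dvd_mul_left hd2
    have hαj : α < j := by
      by_contra hge
      push_neg at hge
      have hdj : (2:ℕ) ^ j ∣ p - 1 := (pow_dvd_pow 2 hge).trans h2α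
      have h1p : p ≡ 1 [MOD 2 ^ j] :=
        ((Nat.modEq_iff_dvd' (by have := hp.two_le; omega)).mpr hdj).symm
      have : p % 2 ^ j = 1 := by
        rw [Nat.ModEq] at h1p
        rw [h1p, Nat.mod_eq_of_lt h1j]
      exact hp1 this
    haveI : NeZero β := ⟨hβ0⟩
    have hcopβ : Nat.Coprime 2 β := (Nat.Prime.coprime_iff_not_dvd Nat.prime_two).mpr hβodd
    set c := orderOf (ZMod.unitOfCoprime 2 hcopβ) with hc
    have hc0 : 0 < c := orderOf_pos _
    have hβdvd : β ∣ 2 ^ c - 1 := aux_dvd_pow_sub_one β c hcopβ dvd_rfl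
    set M := 2 ^ k * (2 ^ c - 1) with hM
    have hrM : r ∣ M := by
      rw [← hrab]
      refine Nat.Coprime.mul_dvd_of_dvd_of_dvd ?_ ?_ ?_
      · exact Nat.Coprime.pow_left _ hcopβ
      · exact dvd_mul_of_dvd_left (pow_dvd_pow 2 (by omega : α ≤ k)) _
      · exact Dvd.dvd.mul_left hβdvd _
    have hqM : q ∣ 2 ^ M - 1 := aux_dvd_pow_sub_one q M hcopq (hr ▸ hrM)
    set l := k + c with hl
    have hqak : q ∣ 2 ^ 2 ^ k + d := by rw [hab]; exact Dvd.dvd.mul_left hqb _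
    have h2M1 : 1 ≤ 2 ^ M := Nat.one_le_two_pow
    have h2c1 : 1 ≤ 2 ^ c := Nat.one_le_two_pow
    have hexp : 2 ^ l = 2 ^ k + M := by
      rw [hl, pow_add, hM]
      obtain ⟨z, hz⟩ := Nat.exists_eq_add_of_le h2c1
      rw [hz, Nat.add_sub_cancel_left]
      ring
    have hqal : q ∣ 2 ^ 2 ^ l + d := by
      have key : 2 ^ 2 ^ l + d = 2 ^ 2 ^ k * (2 ^ M - 1) + (2 ^ 2 ^ k + d) := by
        rw [hexp, pow_add]
        obtain ⟨z, hz⟩ := Nat.exists_eq_add_of_le h2M1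
        rw [hz, Nat.add_sub_cancel_left]
        ring
      rw [key]
      exact dvd_add (Dvd.dvd.mul_left hqM _) hqak
    have hgcd := h k l (by omega) (by omega) (by omega)
    have hqg : q ∣ Nat.gcd (2 ^ 2 ^ k + d) (2 ^ 2 ^ l + d) := Nat.dvd_gcd hqak hqal
    have := Nat.le_of_dvd (Nat.gcd_pos_of_pos_left _ (by positivity)) hqg
    omega
  · -- impossible branch: all bad prime powers are small
    push_neg at hA
    set P : ℕ → Prop := fun p => p % 2 ^ j = 1 with hP
    set C := ∏ p ∈ b.primeFactors.filter P, p ^ b.factorization p with hC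
    set B := ∏ p ∈ b.primeFactors.filter (fun p => ¬ P p), p ^ b.factorization p with hB
    have hfull : ∏ p ∈ b.primeFactors, p ^ b.factorization p = b := by
      rw [← Nat.support_factorization]
      exact Nat.factorization_prod_pow_eq_self hb0
    have hCB : C * B = b := by
      rw [hC, hB, Finset.prod_filter_mul_prod_filter_not, hfull]
    have hCmod : C ≡ 1 [MOD 2 ^ j] := by
      rw [hC]
      refine Finset.prod_induction _ (fun x => x ≡ 1 [MOD 2 ^ j]) ?_ ?_ ?_
      · intro a b ha hb; simpa using ha.mul hb
      · rfl
      · intro p hp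
        rw [Finset.mem_filter] at hp
        have h1 : p ≡ 1 [MOD 2 ^ j] := by
          rw [Nat.ModEq, hp.2, Nat.mod_eq_of_lt h1j]
        simpa using h1.pow (b.factorization p)
    have hBmod : B ≡ t [MOD 2 ^ j] := by
      have h1 : B ≡ C * B [MOD 2 ^ j] := by
        have h2 := hCmod.symm.mul_right B
        rwa [one_mul] at h2
      have h2 : b ≡ t [MOD 2 ^ j] := by
        rw [Nat.ModEq, hbt, Nat.mod_eq_of_lt htj]
      exact h1.trans (hCB ▸ h2)
    have hsmall : ∀ p ∈ b.primeFactors.filter (fun p => ¬ P p), p ^ b.factorization p ≤ m := by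
      intro p hp
      rw [Finset.mem_filter] at hp
      exact hA p _ (Nat.prime_of_mem_primeFactors hp.1) (Nat.ordProj_dvd b p) hp.2
    have hcard : (b.primeFactors.filter (fun p => ¬ P p)).card ≤ m + 1 := by
      have hsub : b.primeFactors.filter (fun p => ¬ P p) ⊆ Finset.range (m + 1) := by
        intro p hp
        rw [Finset.mem_range]
        have hv : b.factorization p ≠ 0 := by
          rw [Finset.mem_filter] at hp
          exact (Nat.Prime.factorization_pos_of_dvd (Nat.prime_of_mem_primeFactors hp.1)
            hb0 (Nat.dvd_of_mem_primeFactors hp.1)).ne'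
        have := le_trans (Nat.le_self_pow hv p) (hsmall p hp)
        omega
      calc (b.primeFactors.filter (fun p => ¬ P p)).card
          ≤ (Finset.range (m + 1)).card := Finset.card_le_card hsub
        _ = m + 1 := Finset.card_range _
    have hBle : B ≤ m ^ (m + 1) := by
      calc B ≤ m ^ (b.primeFactors.filter (fun p => ¬ P p)).card :=
            Finset.prod_le_pow_card _ _ _ hsmall
        _ ≤ m ^ (m + 1) := Nat.pow_le_pow_right hm hcard
    have hBlt : B < 2 ^ j := lt_of_le_of_lt (by omega) (Nat.lt_two_pow_self (n := j))
    have hBt : B = t := by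
      have h1 := hBmod
      rwa [Nat.ModEq, Nat.mod_eq_of_lt hBlt, Nat.mod_eq_of_lt htj] at h1
    have hBb : B ∣ b := by
      rw [← hfull, hB]
      exact Finset.prod_dvd_prod_of_subset _ _ _ (Finset.filter_subset _ _)
    rw [hBt] at hBb
    have h2e : t ∣ 2 ^ e := by
      have := Nat.dvd_sub hBb dvd_rfl
      rwa [hb, Nat.add_sub_cancel] at this
    have hcop : Nat.Coprime t 2 := ((Nat.Prime.coprime_iff_not_dvd Nat.prime_two).mpr ht2).symm
    exact ht1 ((hcop.pow_right e).eq_one_of_dvd h2e)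
end

section
/- Let d = 2^k with k ≥ 1, and define a_n = 2^{2^n} + 2^k. For every positive integer n with n > ν₂(k), there exists a positive integer l > n such that a_n divides a_l. -/
lemma two_pow_sub_one_dvd {a b : ℕ} (h : a ∣ b) : 2 ^ a - 1 ∣ 2 ^ b - 1 := by
  obtain ⟨q, rfl⟩ := h
  have := Nat.sub_dvd_pow_sub_pow (2 ^ a) 1 q
  simpa [← pow_mul] using this

lemma grand (n v m s : ℕ) (hvn : v < n) (hm : ¬ 2 ∣ m) (hmpos : 0 < m)
    (hs : s ≤ 2 ^ n) :
    ∃ l, l > n ∧ 2 ^ s * (2 ^ (2 ^ v * m) + 1) ∣ 2 ^ 2 ^ l - 2 ^ 2 ^ n := by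
  set t := Nat.totient m with htdef
  have ht : 0 < t := Nat.totient_pos.mpr hmpos
  refine ⟨n + t, by omega, ?_⟩
  have hm2 : m ∣ 2 ^ t - 1 := by
    have hco : Nat.Coprime 2 m := (Nat.prime_two.coprime_iff_not_dvd).mpr hm
    have h1 := (Nat.ModEq.pow_totient hco).symm
    exact (Nat.modEq_iff_dvd' Nat.one_le_two_pow).mp h1
  have hdvd : 2 * (2 ^ v * m) ∣ 2 ^ (n + t) - 2 ^ n := by
    have he : 2 ^ (n + t) - 2 ^ n = 2 ^ n * (2 ^ t - 1) := by
      rw [Nat.mul_sub, ← pow_add, mul_one]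
    rw [he]
    have h1 : 2 * 2 ^ v ∣ 2 ^ n := by
      have : 2 * 2 ^ v = 2 ^ (v + 1) := by ring
      rw [this]; exact pow_dvd_pow 2 (by omega)
    have : 2 * (2 ^ v * m) = (2 * 2 ^ v) * m := by ring
    rw [this]
    exact mul_dvd_mul h1 hm2
  have hD : 2 ^ n ≤ 2 ^ (n + t) := Nat.pow_le_pow_right (by norm_num) (by omega)
  have heq : 2 ^ 2 ^ (n + t) - 2 ^ 2 ^ n
      = 2 ^ 2 ^ n * (2 ^ (2 ^ (n + t) - 2 ^ n) - 1) := by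
    rw [Nat.mul_sub, mul_one, ← pow_add, Nat.add_sub_cancel' hD]
  rw [heq]
  refine mul_dvd_mul (pow_dvd_pow 2 hs) ?_
  have h2d : 2 ^ (2 ^ v * m) + 1 ∣ 2 ^ (2 * (2 ^ v * m)) - 1 := by
    have hx : 1 ≤ 2 ^ (2 ^ v * m) := Nat.one_le_two_pow
    have : 2 ^ (2 * (2 ^ v * m)) - 1
        = (2 ^ (2 ^ v * m) + 1) * (2 ^ (2 ^ v * m) - 1) := by
      rw [two_mul, pow_add]
      set x := 2 ^ (2 ^ v * m)
      obtain ⟨y, hy⟩ := Nat.exists_eq_add_of_le hx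
      have h2 : (1 + y) * (1 + y) = ((1 + y) + 1) * y + 1 := by ring
      rw [hy, Nat.add_sub_cancel_left, h2]
      omega
    exact this ▸ Dvd.intro _ rfl
  exact h2d.trans (two_pow_sub_one_dvd hdvd)

theorem stmt_10 (k : ℕ) (hk : 1 ≤ k) (n : ℕ) (hn : 0 < n)
    (hval : padicValNat 2 k < n) :
    ∃ l : ℕ, l > n ∧ (2 ^ 2 ^ n + 2 ^ k) ∣ (2 ^ 2 ^ l + 2 ^ k) := by
  have hk0 : k ≠ 0 := by omega
  set v := padicValNat 2 k with hv
  have hkeq : 2 ^ v * (k / 2 ^ v) = k := by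
    have := Nat.ordProj_mul_ordCompl_eq_self k 2
    rwa [Nat.factorization_def k Nat.prime_two, ← hv] at this
  set m0 := k / 2 ^ v with hm0def
  have hodd : ¬ 2 ∣ m0 := by
    have := Nat.not_dvd_ordCompl Nat.prime_two hk0
    rwa [Nat.factorization_def k Nat.prime_two, ← hv] at this
  clear_value m0 v
  have hvlt : v < n := hval
  have hX2 : (2:ℕ) ∣ 2 ^ (n - v) := dvd_pow_self 2 (by omega)
  have h2n : (2:ℕ) ^ n = 2 ^ v * 2 ^ (n - v) := by
    rw [← pow_add]; congr 1; omega
  have hm0pos : 0 < m0 := by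
    have : m0 ≠ 0 := fun h => hk0 (by rw [← hkeq, h, mul_zero])
    omega
  have hne : k ≠ 2 ^ n := by
    intro h
    have : padicValNat 2 k = n := by rw [h]; exact padicValNat.prime_pow n
    omega
  rcases lt_or_gt_of_ne hne with hlt | hgt
  · -- k < 2^n, s = k, d = 2^n - k = 2^v * (2^(n-v) - m0)
    have hm0lt : m0 < 2 ^ (n - v) := by
      have : 2 ^ v * m0 < 2 ^ v * 2 ^ (n - v) := by rw [hkeq, ← h2n]; exact hlt
      exact Nat.lt_of_mul_lt_mul_left this
    set m := 2 ^ (n - v) - m0 with hmdef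
    have hmodd : ¬ 2 ∣ m := by omega
    have hmpos : 0 < m := by omega
    have hd : 2 ^ n - k = 2 ^ v * m := by
      rw [hmdef, Nat.mul_sub, ← h2n, hkeq]
    obtain ⟨l, hl, hdvd⟩ := grand n v m k hvlt hmodd hmpos hlt.le
    refine ⟨l, hl, ?_⟩
    have haneq : 2 ^ 2 ^ n + 2 ^ k = 2 ^ k * (2 ^ (2 ^ n - k) + 1) := by
      rw [Nat.mul_add, mul_one, ← pow_add, Nat.add_sub_cancel' hlt.le]
    have hmono : 2 ^ 2 ^ n ≤ 2 ^ 2 ^ l := by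
      exact Nat.pow_le_pow_right (by norm_num)
        (Nat.pow_le_pow_right (by norm_num) (by omega))
    have hsplit : 2 ^ 2 ^ l + 2 ^ k = (2 ^ 2 ^ n + 2 ^ k) + (2 ^ 2 ^ l - 2 ^ 2 ^ n) := by
      omega
    rw [hsplit]
    refine dvd_add dvd_rfl ?_
    rw [haneq, hd]
    exact hdvd
  · -- k > 2^n, s = 2^n, d = k - 2^n = 2^v * (m0 - 2^(n-v))
    have hm0gt : 2 ^ (n - v) < m0 := by
      have : 2 ^ v * 2 ^ (n - v) < 2 ^ v * m0 := by rw [hkeq, ← h2n]; exact hgt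
      exact Nat.lt_of_mul_lt_mul_left this
    set m := m0 - 2 ^ (n - v) with hmdef
    have hmodd : ¬ 2 ∣ m := by omega
    have hmpos : 0 < m := by omega
    have hd : k - 2 ^ n = 2 ^ v * m := by
      rw [hmdef, Nat.mul_sub, ← h2n, hkeq]
    obtain ⟨l, hl, hdvd⟩ := grand n v m (2 ^ n) hvlt hmodd hmpos le_rfl
    refine ⟨l, hl, ?_⟩
    have haneq : 2 ^ 2 ^ n + 2 ^ k = 2 ^ 2 ^ n * (2 ^ (k - 2 ^ n) + 1) := by
      rw [Nat.mul_add, mul_one, ← pow_add, Nat.add_sub_cancel' hgt.le]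
      omega
    have hmono : 2 ^ 2 ^ n ≤ 2 ^ 2 ^ l := by
      exact Nat.pow_le_pow_right (by norm_num)
        (Nat.pow_le_pow_right (by norm_num) (by omega))
    have hsplit : 2 ^ 2 ^ l + 2 ^ k = (2 ^ 2 ^ n + 2 ^ k) + (2 ^ 2 ^ l - 2 ^ 2 ^ n) := by
      omega
    rw [hsplit]
    refine dvd_add dvd_rfl ?_
    rw [haneq, hd]
    exact hdvd
end

section
/- For any integer d > 1 and any positive integer m, there exist distinct positive integers k and l such that gcd(2^{2^k} + d, 2^{2^l} + d) > m. -/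
private lemma two_mul_le_pow {k : ℕ} (h : 1 ≤ k) : 2*k ≤ 2^k := by
  induction k with
  | zero => simp
  | succ n ih =>
    rcases Nat.eq_or_lt_of_le h with h1 | h1
    · simp [← h1]
    · have := ih (by omega); rw [pow_succ]; omega

private lemma coprime_two_of_odd {g : ℕ} (h : Odd g) : Nat.Coprime 2 g := by
  rw [Nat.prime_two.coprime_iff_not_dvd]
  simpa [Nat.two_dvd_ne_zero] using Nat.odd_iff.mp h

private lemma odd_dvd_pow_totient_sub_one {g : ℕ} (h : Odd g) : g ∣ 2 ^ g.totient - 1 := by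
  have h1 : (1:ℕ) ≤ 2 ^ g.totient := Nat.one_le_two_pow
  exact (Nat.modEq_iff_dvd' h1).mp (Nat.ModEq.pow_totient (coprime_two_of_odd h)).symm

private lemma assemble (d m k l M : ℕ) (hk : 0 < k) (hkl : k < l) (hM : m < M)
    (h1 : M ∣ 2 ^ 2 ^ k + d) (h2 : M ∣ 2 ^ 2 ^ l + d) :
    ∃ k l : ℕ, 0 < k ∧ 0 < l ∧ k ≠ l ∧
      Nat.gcd (2 ^ 2 ^ k + d) (2 ^ 2 ^ l + d) > m := by
  refine ⟨k, l, hk, by omega, by omega, ?_⟩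
  have hd : M ∣ Nat.gcd (2 ^ 2 ^ k + d) (2 ^ 2 ^ l + d) := Nat.dvd_gcd h1 h2
  have hpos : 0 < Nat.gcd (2 ^ 2 ^ k + d) (2 ^ 2 ^ l + d) :=
    Nat.gcd_pos_of_pos_left _ (by positivity)
  exact lt_of_lt_of_le hM (Nat.le_of_dvd hpos hd)

private lemma prod_primepow_dvd {s : Finset ℕ} (f : ℕ → ℕ) {X : ℕ}
    (hs : ∀ p ∈ s, Nat.Prime p) (h : ∀ p ∈ s, p ^ f p ∣ X) :
    (∏ p ∈ s, p ^ f p) ∣ X := by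
  classical
  induction s using Finset.induction_on with
  | empty => simp
  | @insert p s hp ih =>
    rw [Finset.prod_insert hp]
    have hpp := hs p (Finset.mem_insert_self p s)
    apply Nat.Coprime.mul_dvd_of_dvd_of_dvd
    · apply Nat.Coprime.pow_left
      apply Nat.Coprime.prod_right
      intro q hq
      have hq' := hs q (Finset.mem_insert_of_mem hq)
      exact Nat.Coprime.pow_right _
        ((Nat.coprime_primes hpp hq').mpr (by rintro rfl; exact hp hq))
    · exact h p (Finset.mem_insert_self p s)
    · exact ih (fun q hq => hs q (Finset.mem_insert_of_mem hq))
        (fun q hq => h q (Finset.mem_insert_of_mem hq))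

private lemma caseA (m t : ℕ) (hm : 0 < m) (ht : 0 < t) :
    ∃ k l : ℕ, 0 < k ∧ 0 < l ∧ k ≠ l ∧
      Nat.gcd (2 ^ 2 ^ k + 2 ^ t) (2 ^ 2 ^ l + 2 ^ t) > m := by
  set s := t.factorization 2 with hs
  set t' := t / 2 ^ s with ht'def
  have htt : 2 ^ s * t' = t := Nat.ordProj_mul_ordCompl_eq_self t 2
  have ht'odd : Odd t' := by
    have h2 := Nat.not_dvd_ordCompl Nat.prime_two ht.ne'
    exact Nat.odd_iff.mpr (Nat.two_dvd_ne_zero.mp h2)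
  have ht'pos : 0 < t' := ht'odd.pos
  set k := s + t' + m + 1 with hk
  have hkexp : k - s = t' + m + 1 := by omega
  have hA : t' + 2*m + 2 ≤ 2 ^ (k - s) := by
    rw [hkexp]
    have := two_mul_le_pow (k := t' + m + 1) (by omega)
    omega
  set g := 2 ^ (k - s) - t' with hg
  have hgm : m ≤ g := by omega
  have heven : Even (2 ^ (k - s)) := (Nat.even_pow).mpr ⟨even_two, by omega⟩
  have hgodd : Odd g := Nat.Even.sub_odd (by omega) heven ht'odd
  have hgt' : g + t' = 2 ^ (k - s) := by omega
  have hk2 : 2 ^ s * g + t = 2 ^ k := by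
    have e : 2 ^ s * g + 2 ^ s * t' = 2 ^ s * 2 ^ (k - s) := by
      rw [← Nat.mul_add, hgt']
    rw [← pow_add] at e
    have : s + (k - s) = k := by omega
    rw [this] at e
    omega
  set C := g.totient with hC
  have hC1 : 0 < C := Nat.totient_pos.mpr (by omega)
  set l := k + C with hl
  have hlk' : 2 ^ (l - s) = 2 ^ (k - s) * 2 ^ C := by
    rw [← pow_add]; congr 1; omega
  have hmono : 2 ^ (k - s) ≤ 2 ^ (l - s) := Nat.pow_le_pow_right (by norm_num) (by omega)
  set h := 2 ^ (l - s) - t' with hh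
  have hht' : h + t' = 2 ^ (l - s) := by omega
  have hevenl : Even (2 ^ (l - s)) := (Nat.even_pow).mpr ⟨even_two, by omega⟩
  have hhodd : Odd h := Nat.Even.sub_odd (by omega) hevenl ht'odd
  have hD : g ∣ 2 ^ C - 1 := odd_dvd_pow_totient_sub_one hgodd
  have hgh : g ∣ h := by
    obtain ⟨D, hD2⟩ : ∃ D, 2 ^ C = D + 1 := ⟨2 ^ C - 1, by have := Nat.one_le_two_pow (n := C); omega⟩
    obtain ⟨c, hc⟩ := hD
    have hDg : D = g * c := by omega
    have e1 : 2 ^ (k - s) * D + 2 ^ (k - s) = 2 ^ (l - s) := by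
      rw [hlk', hD2]; ring
    have : h = g + 2 ^ (k - s) * D := by omega
    rw [this, hDg]
    exact Nat.dvd_add dvd_rfl (Dvd.dvd.mul_left ⟨c, rfl⟩ _)
  obtain ⟨w, hw⟩ := hgh
  have hwodd : Odd w := by
    rcases Nat.even_or_odd w with he | ho
    · exact absurd (hw ▸ he.mul_left g) (Nat.not_even_iff_odd.mpr hhodd)
    · exact ho
  set x := 2 ^ (2 ^ s * g) with hx
  set M := x + 1 with hMdef
  have hdk : M ∣ 2 ^ 2 ^ k + 2 ^ t := by
    have e : 2 ^ 2 ^ k = 2 ^ t * x := by rw [hx, ← pow_add]; congr 1; omega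
    have e2 : 2 ^ t * x + 2 ^ t = 2 ^ t * M := by rw [hMdef]; ring
    rw [e, e2]
    exact dvd_mul_left M (2 ^ t)
  have hl2 : 2 ^ s * h + t = 2 ^ l := by
    have e : 2 ^ s * h + 2 ^ s * t' = 2 ^ s * 2 ^ (l - s) := by
      rw [← Nat.mul_add, hht']
    rw [← pow_add] at e
    have : s + (l - s) = l := by omega
    rw [this] at e
    omega
  have hdl : M ∣ 2 ^ 2 ^ l + 2 ^ t := by
    have hxw : 2 ^ (2 ^ s * h) = x ^ w := by
      rw [hx, ← pow_mul]; congr 1; rw [hw]; ring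
    have e : 2 ^ 2 ^ l = 2 ^ t * x ^ w := by rw [← hxw, ← pow_add]; congr 1; omega
    have e2 : 2 ^ t * x ^ w + 2 ^ t = 2 ^ t * (x ^ w + 1) := by ring
    rw [e, e2]
    have hdvd : M ∣ x ^ w + 1 := by simpa using Odd.nat_add_dvd_pow_add_pow x 1 hwodd
    exact hdvd.trans (dvd_mul_left _ _)
  have hMm : m < M := by
    have h1 : g < 2 ^ g := Nat.lt_two_pow_self
    have h2 : 2 ^ g ≤ x := by
      rw [hx]
      exact Nat.pow_le_pow_right (by norm_num) (Nat.le_mul_of_pos_left g (by positivity))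
    omega
  exact assemble (2 ^ t) m k l M (by omega) (by omega) hMm hdk hdl

private lemma caseB (m t u : ℕ) (hm : 0 < m) (hu : Odd u) (hu1 : 1 < u) :
    ∃ k l : ℕ, 0 < k ∧ 0 < l ∧ k ≠ l ∧
      Nat.gcd (2 ^ 2 ^ k + 2 ^ t * u) (2 ^ 2 ^ l + 2 ^ t * u) > m := by
  classical
  obtain ⟨k, hk⟩ : ∃ k, k = t + u + m + 2 := ⟨_, rfl⟩
  have h2k : t + k + 1 ≤ 2 ^ k := by
    have := two_mul_le_pow (k := k) (by omega)
    omega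
  obtain ⟨e, he⟩ : ∃ e, e = 2 ^ k - t := ⟨_, rfl⟩
  have he1 : k + 1 ≤ e := by omega
  have het : e + t = 2 ^ k := by omega
  obtain ⟨N, hNdef⟩ : ∃ N, N = 2 ^ e + u := ⟨_, rfl⟩
  have hN0 : N ≠ 0 := by rw [hNdef]; positivity
  have hNodd : Odd N := by
    rw [hNdef]
    exact Even.add_odd ((Nat.even_pow).mpr ⟨even_two, by omega⟩) hu
  have hak : 2 ^ 2 ^ k + 2 ^ t * u = 2 ^ t * N := by
    have e1 : 2 ^ 2 ^ k = 2 ^ t * 2 ^ e := by rw [← pow_add]; congr 1; omega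
    rw [e1, hNdef]; ring
  obtain ⟨P, hP⟩ : ∃ P, P = N.primeFactors.filter (fun p => ¬ (2 ^ (k+1) ∣ p - 1)) := ⟨_, rfl⟩
  obtain ⟨M, hM⟩ : ∃ M, M = ∏ p ∈ P, p ^ N.factorization p := ⟨_, rfl⟩
  obtain ⟨B, hB⟩ : ∃ B, B = ∏ p ∈ N.primeFactors.filter (fun p => (2 ^ (k+1) ∣ p - 1)),
      p ^ N.factorization p := ⟨_, rfl⟩
  have hMB : B * M = N := by
    rw [hB, hM, hP, Finset.prod_filter_mul_prod_filter_not]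
    have h2 := Nat.factorization_prod_pow_eq_self hN0
    simpa [Finsupp.prod, Nat.support_factorization] using h2
  have hprimes : ∀ p ∈ P, Nat.Prime p := fun p hp =>
    Nat.prime_of_mem_primeFactors (Finset.mem_filter.mp (hP ▸ hp)).1
  have hB1 : B ≡ 1 [MOD 2 ^ (k+1)] := by
    rw [hB]
    apply Finset.prod_induction _ (fun z => z ≡ 1 [MOD 2 ^ (k+1)])
    · intro a b ha hb; simpa using ha.mul hb
    · rfl
    · intro p hp
      obtain ⟨hpf, hdvd⟩ := Finset.mem_filter.mp hp
      have hpprime := Nat.prime_of_mem_primeFactors hpf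
      have h1p : (1:ℕ) ≡ p [MOD 2 ^ (k+1)] :=
        (Nat.modEq_iff_dvd' hpprime.one_lt.le).mpr hdvd
      simpa using (h1p.symm.pow (N.factorization p))
  have hMN : M ∣ N := ⟨B, by rw [← hMB]; ring⟩
  have hM0 : 0 < M := Nat.pos_of_ne_zero (fun h => hN0 (by rw [← hMB, h, mul_zero]))
  have hMu : M ≡ u [MOD 2 ^ (k+1)] := by
    have huN : u ≤ N := by rw [hNdef]; exact Nat.le_add_left u _
    have hNu : N ≡ u [MOD 2 ^ (k+1)] := by
      refine ((Nat.modEq_iff_dvd' huN).mpr ?_).symm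
      have h4 : N - u = 2 ^ e := by rw [hNdef]; simp
      rw [h4]
      exact pow_dvd_pow 2 (by omega)
    have h2 : M ≡ B * M [MOD 2 ^ (k+1)] := by
      simpa using (Nat.ModEq.mul_right M hB1.symm)
    calc M ≡ B * M [MOD 2 ^ (k+1)] := h2
      _ = N := hMB
      _ ≡ u [MOD 2 ^ (k+1)] := hNu
  have hkpow : k < 2 ^ (k+1) :=
    lt_of_lt_of_le (Nat.lt_two_pow_self (n := k)) (pow_le_pow_right₀ (by norm_num) (by omega))
  have hMm : m < M := by
    by_contra hle
    push_neg at hle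
    have hMlt : M < 2 ^ (k+1) := lt_trans (lt_of_le_of_lt hle (by omega : m < k)) hkpow
    have hult : u < 2 ^ (k+1) := lt_trans (by omega : u < k) hkpow
    have hMeq : M = u := by
      have h3 := hMu
      rwa [Nat.ModEq, Nat.mod_eq_of_lt hMlt, Nat.mod_eq_of_lt hult] at h3
    have huN : u ∣ N := hMeq ▸ hMN
    have hu2 : u ∣ 2 ^ e := by
      have h4 : N - u = 2 ^ e := by rw [hNdef]; simp
      exact h4 ▸ Nat.dvd_sub huN dvd_rfl
    have := ((coprime_two_of_odd hu).symm.pow_right e).eq_one_of_dvd hu2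
    omega
  -- construct l
  obtain ⟨W, hW⟩ : ∃ W, W = M.totient / 2 ^ (M.totient.factorization 2) := ⟨_, rfl⟩
  have hφpos : 0 < M.totient := Nat.totient_pos.mpr hM0
  have hWodd : Odd W := by
    rw [hW]
    exact Nat.odd_iff.mpr (Nat.two_dvd_ne_zero.mp (Nat.not_dvd_ordCompl Nat.prime_two hφpos.ne'))
  obtain ⟨C, hC⟩ : ∃ C, C = W.totient := ⟨_, rfl⟩
  have hCpos : 0 < C := by rw [hC]; exact Nat.totient_pos.mpr hWodd.pos
  obtain ⟨l, hl⟩ : ∃ l, l = k + C := ⟨_, rfl⟩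
  obtain ⟨E, hE⟩ : ∃ E, E = 2 ^ k * (2 ^ C - 1) := ⟨_, rfl⟩
  have hW2 : W ∣ 2 ^ C - 1 := by rw [hC]; exact odd_dvd_pow_totient_sub_one hWodd
  have hMdvd : M ∣ 2 ^ E - 1 := by
    rw [hM]
    apply prod_primepow_dvd _ hprimes
    intro p hp
    have hp' := hP ▸ hp
    obtain ⟨hpf, hnd⟩ := Finset.mem_filter.mp hp'
    have hpp := Nat.prime_of_mem_primeFactors hpf
    have hpodd : p ≠ 2 := by
      rintro rfl
      exact (Nat.not_even_iff_odd.mpr hNodd)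
        (even_iff_two_dvd.mpr (Nat.dvd_of_mem_primeFactors hpf))
    have hep : 0 < N.factorization p :=
      hpp.factorization_pos_of_dvd hN0 (Nat.dvd_of_mem_primeFactors hpf)
    obtain ⟨q, hq⟩ : ∃ q, q = p ^ N.factorization p := ⟨_, rfl⟩
    have hqM : q ∣ M := by rw [hq, hM]; exact Finset.dvd_prod_of_mem _ hp
    have hφq : q.totient ∣ M.totient := Nat.totient_dvd_of_dvd hqM
    have hqodd : Odd q := by rw [hq]; exact (hpp.odd_of_ne_two hpodd).pow
    obtain ⟨a, ha⟩ : ∃ a, a = q.totient.factorization 2 := ⟨_, rfl⟩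
    obtain ⟨wq, hwq⟩ : ∃ wq, wq = q.totient / 2 ^ a := ⟨_, rfl⟩
    have haw : 2 ^ a * wq = q.totient := by
      rw [hwq, ha]; exact Nat.ordProj_mul_ordCompl_eq_self _ 2
    have hale : a ≤ k := by
      by_contra hgt
      push_neg at hgt
      have h2a : (2:ℕ) ^ (k+1) ∣ 2 ^ a := pow_dvd_pow 2 (by omega)
      have hdvdφ : (2:ℕ) ^ a ∣ q.totient := ⟨wq, haw.symm⟩
      have hform : q.totient = p ^ (N.factorization p - 1) * (p - 1) := by
        rw [hq]; exact Nat.totient_prime_pow hpp hep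
      have hcop : Nat.Coprime (2 ^ a) (p ^ (N.factorization p - 1)) :=
        Nat.Coprime.pow _ _ ((Nat.coprime_primes Nat.prime_two hpp).mpr (Ne.symm hpodd))
      have h5 : (2:ℕ) ^ a ∣ p - 1 := hcop.dvd_of_dvd_mul_left (by rw [← hform]; exact hdvdφ)
      exact hnd (h2a.trans h5)
    have hwqW : wq ∣ W := by
      rw [hwq, ha, hW]
      exact Nat.ordCompl_dvd_ordCompl_of_dvd hφq 2
    have hφqE : q.totient ∣ E := by
      rw [← haw, hE]
      exact mul_dvd_mul (pow_dvd_pow 2 hale) (hwqW.trans hW2)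
    obtain ⟨c, hc⟩ := hφqE
    have h1 : q ∣ 2 ^ q.totient - 1 := by
      have h6 : (1:ℕ) ≤ 2 ^ q.totient := Nat.one_le_two_pow
      exact (Nat.modEq_iff_dvd' h6).mp (Nat.ModEq.pow_totient (coprime_two_of_odd hqodd)).symm
    have h2 : (2:ℕ) ^ q.totient - 1 ∣ 2 ^ E - 1 := by
      have h7 := Nat.sub_dvd_pow_sub_pow (2 ^ q.totient) 1 c
      simpa [← pow_mul, ← hc] using h7
    rw [← hq]
    exact h1.trans h2
  have hdk : M ∣ 2 ^ 2 ^ k + 2 ^ t * u := by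
    rw [hak]
    exact hMN.trans (dvd_mul_left N _)
  have hdl : M ∣ 2 ^ 2 ^ l + 2 ^ t * u := by
    have hsplit : 2 ^ 2 ^ l + 2 ^ t * u = (2 ^ 2 ^ k + 2 ^ t * u) + 2 ^ 2 ^ k * (2 ^ E - 1) := by
      obtain ⟨D, hD⟩ : ∃ D, 2 ^ C = D + 1 :=
        ⟨2 ^ C - 1, by have := Nat.one_le_two_pow (n := C); omega⟩
      have hED : E = 2 ^ k * D := by rw [hE]; congr 1; omega
      have e1 : (2:ℕ) ^ k * 2 ^ C = 2 ^ l := by rw [hl, pow_add]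
      have e2 : (2:ℕ) ^ k * D + 2 ^ k = 2 ^ l := by
        rw [hD] at e1; rw [← e1]; ring
      have hexp : 2 ^ k + E = 2 ^ l := by rw [hED]; omega
      obtain ⟨F, hF⟩ : ∃ F, 2 ^ E = F + 1 :=
        ⟨2 ^ E - 1, by have := Nat.one_le_two_pow (n := E); omega⟩
      have e3 : (2:ℕ) ^ 2 ^ k * 2 ^ E = 2 ^ 2 ^ l := by rw [← pow_add, hexp]
      have e4 : (2:ℕ) ^ 2 ^ k * F + 2 ^ 2 ^ k = 2 ^ 2 ^ l := by
        rw [hF] at e3; rw [← e3]; ring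
      have e5 : 2 ^ 2 ^ k * (2 ^ E - 1) = 2 ^ 2 ^ k * F := by congr 1; omega
      omega
    rw [hsplit]
    exact dvd_add hdk (Dvd.dvd.mul_left hMdvd _)
  exact assemble (2 ^ t * u) m k l M (by omega) (by omega) hMm hdk hdl

theorem stmt_11 (d m : ℕ) (hd : 1 < d) (hm : 0 < m) :
    ∃ k l : ℕ, 0 < k ∧ 0 < l ∧ k ≠ l ∧
      Nat.gcd (2 ^ 2 ^ k + d) (2 ^ 2 ^ l + d) > m := by
  obtain ⟨t, ht⟩ : ∃ t, t = d.factorization 2 := ⟨_, rfl⟩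
  obtain ⟨u, hu⟩ : ∃ u, u = d / 2 ^ (d.factorization 2) := ⟨_, rfl⟩
  have htu : 2 ^ t * u = d := by rw [ht, hu]; exact Nat.ordProj_mul_ordCompl_eq_self d 2
  have huodd : Odd u := by
    rw [hu]
    exact Nat.odd_iff.mpr
      (Nat.two_dvd_ne_zero.mp (Nat.not_dvd_ordCompl Nat.prime_two (by omega)))
  rcases eq_or_lt_of_le (Nat.one_le_iff_ne_zero.mpr huodd.pos.ne') with h1 | h1
  · have hdt : d = 2 ^ t := by rw [← htu, ← h1]; simp
    have ht1 : 0 < t := by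
      rcases Nat.eq_zero_or_pos t with h | h
      · rw [h, pow_zero] at hdt; omega
      · exact h
    rw [hdt]
    exact caseA m t hm ht1
  · rw [← htu]
    exact caseB m t u hm huodd h1
end

section
/- For any integer d > 1, the set {gcd(2^{2^k} + d, 2^{2^l} + d) : k, l positive integers, k ≠ l} is unbounded. -/
lemma L1 {A B : ℕ} (h : A ∣ B) : 2 ^ A - 1 ∣ 2 ^ B - 1 := by
  obtain ⟨t, rfl⟩ := h
  have := Nat.sub_dvd_pow_sub_pow (2 ^ A) 1 t
  simpa [← pow_mul] using this

lemma L2 {M : ℕ} : ∀ n : ℕ, 0 < n → (∀ p, p.Prime → p ∣ n → p ≡ 1 [MOD M]) →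
    n ≡ 1 [MOD M] := by
  intro n
  induction n using Nat.strong_induction_on with
  | _ n ih =>
    intro hn h
    rcases eq_or_ne n 1 with rfl | hne
    · rfl
    · have hp : n.minFac.Prime := Nat.minFac_prime hne
      have hdvd : n.minFac ∣ n := Nat.minFac_dvd n
      have hlt : n / n.minFac < n := Nat.div_lt_self hn hp.one_lt
      have hpos : 0 < n / n.minFac := Nat.div_pos (Nat.le_of_dvd hn hdvd) hp.pos
      have h2 := ih _ hlt hpos (fun p hpp hpd => h p hpp (hpd.trans (Nat.div_dvd_of_dvd hdvd)))
      have h1 := h _ hp hdvd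
      calc n = n.minFac * (n / n.minFac) := (Nat.mul_div_cancel' hdvd).symm
        _ ≡ 1 * 1 [MOD M] := Nat.ModEq.mul h1 h2
        _ = 1 := one_mul 1

-- key construction lemma: if g divides 2^(2^k)+d and 2^(2^k * w) - 1 with w odd positive,
-- then g divides 2^(2^(k+s))+d where s = totient w ≥ 1.
lemma L3 {g d k w : ℕ} (hw : ¬ 2 ∣ w) (hwpos : 0 < w)
    (hga : g ∣ 2 ^ 2 ^ k + d) (hgp : g ∣ 2 ^ (2 ^ k * w) - 1) :
    0 < w.totient ∧ g ∣ 2 ^ 2 ^ (k + w.totient) + d := by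
  set s := w.totient with hs
  have hspos : 0 < s := Nat.totient_pos.mpr hwpos
  refine ⟨hspos, ?_⟩
  have hcop : Nat.Coprime 2 w := (Nat.prime_two.coprime_iff_not_dvd).mpr hw
  have heuler : 2 ^ s ≡ 1 [MOD w] := Nat.ModEq.pow_totient hcop
  have hwd : w ∣ 2 ^ s - 1 := (Nat.modEq_iff_dvd' (Nat.one_le_two_pow)).mp heuler.symm
  have h1 : 2 ^ k * w ∣ 2 ^ (k + s) - 2 ^ k := by
    have : 2 ^ (k + s) - 2 ^ k = 2 ^ k * (2 ^ s - 1) := by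
      rw [Nat.mul_sub, pow_add, mul_one]
    rw [this]
    exact mul_dvd_mul_left _ hwd
  have h2 : g ∣ 2 ^ (2 ^ (k + s) - 2 ^ k) - 1 := hgp.trans (L1 h1)
  have hle : 2 ^ k ≤ 2 ^ (k + s) := Nat.pow_le_pow_right (by norm_num) (Nat.le_add_right _ _)
  have h3 : 2 ^ 2 ^ k * 2 ^ (2 ^ (k + s) - 2 ^ k) = 2 ^ 2 ^ (k + s) := by
    rw [← pow_add, Nat.add_sub_cancel' hle]
  have hX1 : 1 ≤ 2 ^ (2 ^ (k + s) - 2 ^ k) := Nat.one_le_two_pow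
  have key : 2 ^ 2 ^ (k + s) + d =
      2 ^ 2 ^ k * (2 ^ (2 ^ (k + s) - 2 ^ k) - 1) + (2 ^ 2 ^ k + d) := by
    rw [Nat.mul_sub, h3, mul_one]
    have hle2 : 2 ^ 2 ^ k ≤ 2 ^ 2 ^ (k + s) := Nat.pow_le_pow_right (by norm_num) hle
    omega
  rw [key]
  exact Nat.dvd_add (Dvd.dvd.mul_left h2 _) hga

theorem stmt_12 (d : ℕ) (hd : 1 < d) :
    ¬ BddAbove {g : ℕ | ∃ k l : ℕ, 0 < k ∧ 0 < l ∧ k ≠ l ∧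
      g = Nat.gcd (2 ^ 2 ^ k + d) (2 ^ 2 ^ l + d)} := by
  rintro ⟨N, hN⟩
  simp only [upperBounds, Set.mem_setOf_eq] at hN
  obtain ⟨c, d₂, hd2, hdeq⟩ := Nat.exists_eq_pow_mul_and_not_dvd (n := d) (by omega) 2 (by norm_num)
  by_cases h1 : d₂ = 1
  · -- Case 1: d = 2^c, c ≥ 1
    subst h1
    rw [mul_one] at hdeq
    subst hdeq
    have hc1 : 0 < c := by
      rcases Nat.eq_zero_or_pos c with rfl | h
      · simp at hd
      · exact h
    set k := c + N + 1 with hk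
    have hk1 : 0 < k := by omega
    have hck : c < 2 ^ k := lt_of_lt_of_le (by omega) (Nat.le_of_lt (Nat.lt_two_pow_self (n := k)))
    set m := 2 ^ k - c with hm
    have hmpos : 0 < m := by omega
    obtain ⟨b, m', hm', hmm⟩ := Nat.exists_eq_pow_mul_and_not_dvd (n := m) (by omega) 2 (by norm_num)
    have hm'pos : 0 < m' := by
      rcases Nat.eq_zero_or_pos m' with h | h
      · exfalso; exact hm' (h ▸ dvd_zero 2)
      · exact h
    have hbk : b < k := by
      by_contra hb
      push_neg at hb
      have hA : 2 ^ k ≤ 2 ^ b := Nat.pow_le_pow_right (by norm_num) hb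
      have hB : 2 ^ b ≤ m := hmm ▸ Nat.le_mul_of_pos_right _ hm'pos
      omega
    set s := m'.totient with hs
    have hspos : 0 < s := Nat.totient_pos.mpr hm'pos
    set l := k + s with hl
    set n := 2 ^ l - c with hn
    have hcl : c < 2 ^ l := lt_of_lt_of_le hck (Nat.pow_le_pow_right (by norm_num) (by omega))
    -- m' ∣ 2^s - 1
    have hcop : Nat.Coprime 2 m' := (Nat.prime_two.coprime_iff_not_dvd).mpr hm'
    have hwd : m' ∣ 2 ^ s - 1 := (Nat.modEq_iff_dvd' Nat.one_le_two_pow).mp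
      (Nat.ModEq.pow_totient hcop).symm
    -- m ∣ n
    have hdiffeq : 2 ^ l - 2 ^ k = 2 ^ k * (2 ^ s - 1) := by
      rw [Nat.mul_sub, pow_add, mul_one]
    have hnm : n = m + 2 ^ k * (2 ^ s - 1) := by
      have h2kl : 2 ^ k ≤ 2 ^ l := Nat.pow_le_pow_right (by norm_num) (by omega)
      have := hdiffeq
      omega
    have hm'n : m' ∣ n := by
      rw [hnm]
      exact Nat.dvd_add (hmm ▸ Dvd.intro_left _ rfl) (Dvd.dvd.mul_left hwd _)
    have hbn : 2 ^ b ∣ n := by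
      rw [hnm]
      exact Nat.dvd_add (hmm ▸ Dvd.intro _ rfl) ((pow_dvd_pow 2 hbk.le).mul_right _)
    have hmn : m ∣ n := by
      rw [hmm]
      exact Nat.Coprime.mul_dvd_of_dvd_of_dvd
        (Nat.Coprime.pow_left _ ((Nat.prime_two.coprime_iff_not_dvd).mpr hm')) hbn hm'n
    obtain ⟨t, hnt⟩ := hmn
    -- t odd
    have ht_odd : ¬ 2 ∣ t := by
      intro h2t
      have h2b1 : 2 ^ (b + 1) ∣ n := by
        rw [hnt, hmm]
        obtain ⟨t', rfl⟩ := h2t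
        exact ⟨m' * t', by ring⟩
      have h2b1m : ¬ 2 ^ (b + 1) ∣ m := by
        rw [hmm, pow_succ]
        intro hdd
        exact hm' ((Nat.mul_dvd_mul_iff_left (show 0 < 2 ^ b by positivity)).mp hdd)
      have h2bk : 2 ^ (b + 1) ∣ 2 ^ k * (2 ^ s - 1) :=
        ((pow_dvd_pow 2 hbk).mul_right _)
      rw [hnm] at h2b1
      exact h2b1m ((Nat.dvd_add_right h2bk).mp (by rwa [Nat.add_comm m _] at h2b1))
    -- 2^m + 1 ∣ 2^n + 1 via ℤ
    have hdvdmain : 2 ^ m + 1 ∣ 2 ^ n + 1 := by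
      have hZ : ((2:ℤ) ^ m + 1) ∣ ((2:ℤ) ^ n + 1) := by
        have := Odd.add_dvd_pow_add_pow ((2:ℤ) ^ m) 1 (n := t) (Nat.odd_iff.mpr (Nat.two_dvd_ne_zero.mp ht_odd ▸ rfl))
        simpa [← pow_mul, ← hnt] using this
      exact_mod_cast hZ
    -- both a_k and a_l divisible
    have hak : 2 ^ 2 ^ k + 2 ^ c = 2 ^ c * (2 ^ m + 1) := by
      rw [Nat.mul_add, mul_one, ← pow_add, Nat.add_sub_cancel' hck.le]
    have hal : 2 ^ 2 ^ l + 2 ^ c = 2 ^ c * (2 ^ n + 1) := by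
      rw [Nat.mul_add, mul_one, ← pow_add, Nat.add_sub_cancel' hcl.le]
    have hdk : (2 ^ m + 1) ∣ 2 ^ 2 ^ k + 2 ^ c := hak ▸ Dvd.dvd.mul_left dvd_rfl _
    have hdl : (2 ^ m + 1) ∣ 2 ^ 2 ^ l + 2 ^ c := hal ▸ Dvd.dvd.mul_left hdvdmain _
    have hmem := hN ⟨k, l, hk1, by omega, by omega, rfl⟩
    have hgcd : (2 ^ m + 1) ∣ Nat.gcd (2 ^ 2 ^ k + 2 ^ c) (2 ^ 2 ^ l + 2 ^ c) :=
      Nat.dvd_gcd hdk hdl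
    have hpos : 0 < Nat.gcd (2 ^ 2 ^ k + 2 ^ c) (2 ^ 2 ^ l + 2 ^ c) :=
      Nat.gcd_pos_of_pos_left _ (by positivity)
    have hle := Nat.le_of_dvd hpos hgcd
    have hmN : N < 2 ^ m + 1 := by
      have : N + 1 ≤ m := by
        have := Nat.lt_two_pow_self (n := k)
        omega
      have := Nat.lt_two_pow_self (n := N)
      have h2 : 2 ^ N ≤ 2 ^ m := Nat.pow_le_pow_right (by norm_num) (by omega)
      omega
    omega
  · -- Case 2: d₂ > 1 odd part
    have hd2pos : 0 < d₂ := by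
      rcases Nat.eq_zero_or_pos d₂ with rfl | h
      · omega
      · exact h
    have hd21 : 1 < d₂ := by omega
    set k := c + d + N + 1 with hk
    have hk1 : 0 < k := by omega
    have hkk : k < 2 ^ k := Nat.lt_two_pow_self (n := k)
    have hck : c < 2 ^ k := by omega
    have hdk : d < 2 ^ (k + 1) := by
      have : d < 2 ^ d := Nat.lt_two_pow_self (n := d)
      have h2 : 2 ^ d ≤ 2 ^ (k + 1) := Nat.pow_le_pow_right (by norm_num) (by omega)
      omega
    have hNk : 2 ^ c * N < 2 ^ (k + 1) := by
      have h1 : N < 2 ^ N := Nat.lt_two_pow_self (n := N)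
      have h2 : 2 ^ c * N < 2 ^ c * 2 ^ N := by
        rcases Nat.eq_zero_or_pos N with rfl | hNpos
        · positivity
        · exact (Nat.mul_lt_mul_left (by positivity)).mpr h1
      have h3 : 2 ^ c * 2 ^ N = 2 ^ (c + N) := (pow_add 2 c N).symm
      have h4 : 2 ^ (c + N) ≤ 2 ^ (k + 1) := Nat.pow_le_pow_right (by norm_num) (by omega)
      omega
    set q := 2 ^ (2 ^ k - c) + d₂ with hq
    have hqpos : 0 < q := by positivity
    have hq_odd : ¬ 2 ∣ q := by
      have hxc : 0 < 2 ^ k - c := by omega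
      have : 2 ∣ 2 ^ (2 ^ k - c) := dvd_pow_self 2 (by omega)
      omega
    have haq : 2 ^ 2 ^ k + d = 2 ^ c * q := by
      have hsplit : 2 ^ 2 ^ k = 2 ^ c * 2 ^ (2 ^ k - c) := by
        rw [← pow_add, Nat.add_sub_cancel' hck.le]
      rw [hq, hdeq, hsplit]
      ring
    have hqa : q ∣ 2 ^ 2 ^ k + d := haq ▸ Dvd.dvd.mul_left dvd_rfl _
    have hφpos : 0 < q.totient := Nat.totient_pos.mpr hqpos
    set w := q.totient / 2 ^ (q.totient).factorization 2 with hw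
    have hw_odd : ¬ 2 ∣ w := Nat.not_dvd_ordCompl Nat.prime_two hφpos.ne'
    have hw_pos : 0 < w := Nat.ordCompl_pos 2 hφpos.ne'
    set g := Nat.gcd q (2 ^ (2 ^ k * w) - 1) with hg
    have hgq : g ∣ q := Nat.gcd_dvd_left _ _
    have hgpow : g ∣ 2 ^ (2 ^ k * w) - 1 := Nat.gcd_dvd_right _ _
    have hgpos : 0 < g := Nat.gcd_pos_of_pos_left _ hqpos
    -- Claim A: all primes of q/g are 1 mod 2^(k+1)
    have hprimes : ∀ p, p.Prime → p ∣ q / g → p ≡ 1 [MOD 2 ^ (k + 1)] := by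
      intro p hp hpdvd
      have hpq : p ∣ q := hpdvd.trans (Nat.div_dvd_of_dvd hgq)
      have hp_odd : p ≠ 2 := by rintro rfl; exact hq_odd hpq
      by_contra hcon
      have h2 : ¬ (2 ^ (k + 1) ∣ p - 1) := fun hdvd =>
        hcon ((Nat.modEq_iff_dvd' hp.one_le).mpr hdvd).symm
      obtain ⟨c', m'', hm'', hpm⟩ := Nat.exists_eq_pow_mul_and_not_dvd
        (n := p - 1) (by have := hp.two_le; omega) 2 (by norm_num)
      have hc'k : c' ≤ k := by
        by_contra hb
        push_neg at hb
        exact h2 (hpm ▸ ((pow_dvd_pow 2 hb).mul_right _))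
      set e := q.factorization p with he
      have hepos : 0 < e := (Nat.Prime.factorization_pos_of_dvd hp hqpos.ne' hpq)
      have hpeq : p ^ e ∣ q := Nat.ordProj_dvd q p
      have hφpe : (p ^ e).totient = 2 ^ c' * (p ^ (e - 1) * m'') := by
        rw [Nat.totient_prime_pow hp hepos, hpm]; ring
      have hO_odd : ¬ 2 ∣ p ^ (e - 1) * m'' := by
        intro hdd
        rcases (Nat.Prime.dvd_mul Nat.prime_two).mp hdd with h | h
        · exact hp_odd (((Nat.prime_dvd_prime_iff_eq Nat.prime_two hp).mp
            (Nat.Prime.dvd_of_dvd_pow Nat.prime_two h)).symm)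
        · exact hm'' h
      have hOw : (p ^ (e - 1) * m'') ∣ w := by
        have hOφ : (p ^ (e - 1) * m'') ∣ q.totient :=
          (Dvd.intro_left _ hφpe.symm).trans (Nat.totient_dvd_of_dvd hpeq)
        have hsplit := Nat.ordProj_mul_ordCompl_eq_self q.totient 2
        have hOcop : Nat.Coprime (p ^ (e - 1) * m'') (2 ^ (q.totient).factorization 2) :=
          Nat.Coprime.pow_right _
            (Nat.coprime_comm.mp ((Nat.prime_two.coprime_iff_not_dvd).mpr hO_odd))
        exact hOcop.dvd_of_dvd_mul_left (by rw [hsplit]; exact hOφ)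
      have hφdvd : (p ^ e).totient ∣ 2 ^ k * w := by
        rw [hφpe]
        exact mul_dvd_mul (pow_dvd_pow 2 hc'k) hOw
      have heuler : p ^ e ∣ 2 ^ (2 ^ k * w) - 1 := by
        have hcop2 : Nat.Coprime 2 (p ^ e) :=
          Nat.Coprime.pow_right _ ((Nat.prime_two.coprime_iff_not_dvd).mpr
            (fun hdd => hp_odd (((Nat.prime_dvd_prime_iff_eq Nat.prime_two hp).mp hdd).symm)))
        have hmodeq := Nat.ModEq.pow_totient hcop2
        have hdd : p ^ e ∣ 2 ^ ((p ^ e).totient) - 1 :=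
          (Nat.modEq_iff_dvd' Nat.one_le_two_pow).mp hmodeq.symm
        exact hdd.trans (L1 hφdvd)
      have hpeg : p ^ e ∣ g := Nat.dvd_gcd hpeq heuler
      have hfinal : p ^ (e + 1) ∣ q := by
        obtain ⟨r, hr⟩ := hpdvd
        obtain ⟨u, hu⟩ := hpeg
        have hqe : q = (q / g) * g := (Nat.div_mul_cancel hgq).symm
        exact ⟨r * u, by rw [hqe, hr, hu]; ring⟩
      exact Nat.pow_succ_factorization_not_dvd hqpos.ne' hp hfinal
    have hqgpos : 0 < q / g := Nat.div_pos (Nat.le_of_dvd hqpos hgq) hgpos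
    have hqg1 : q / g ≡ 1 [MOD 2 ^ (k + 1)] := L2 _ hqgpos hprimes
    have hmodd : d ≡ 2 ^ c * g [MOD 2 ^ (k + 1)] := by
      have hdvd2 : 2 ^ (k + 1) ∣ 2 ^ 2 ^ k := pow_dvd_pow 2 (by omega)
      have h1 : 2 ^ 2 ^ k + d ≡ 0 + d [MOD 2 ^ (k + 1)] :=
        Nat.ModEq.add_right d ((Nat.modEq_zero_iff_dvd).mpr hdvd2)
      have h2 : 2 ^ c * g * (q / g) = 2 ^ 2 ^ k + d := by
        rw [mul_assoc, Nat.mul_div_cancel' hgq, ← haq]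
      calc d = 0 + d := (zero_add d).symm
        _ ≡ 2 ^ 2 ^ k + d [MOD 2 ^ (k + 1)] := h1.symm
        _ = 2 ^ c * g * (q / g) := h2.symm
        _ ≡ 2 ^ c * g * 1 [MOD 2 ^ (k + 1)] := Nat.ModEq.mul_left _ hqg1
        _ = 2 ^ c * g := mul_one _
    have hgN : N < g := by
      by_contra hle
      push_neg at hle
      have hlt : 2 ^ c * g < 2 ^ (k + 1) :=
        lt_of_le_of_lt (Nat.mul_le_mul_left _ hle) hNk
      have hdg : d = 2 ^ c * g := by
        have h := hmodd
        unfold Nat.ModEq at h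
        rwa [Nat.mod_eq_of_lt hdk, Nat.mod_eq_of_lt hlt] at h
      have hgd2 : d₂ = g := by
        rw [hdeq] at hdg
        exact Nat.eq_of_mul_eq_mul_left (by positivity) hdg
      have hd2q : d₂ ∣ q := hgd2 ▸ hgq
      have hd2pow : d₂ ∣ 2 ^ (2 ^ k - c) := by
        have := Nat.dvd_sub hd2q (dvd_refl d₂)
        rwa [hq, Nat.add_sub_cancel] at this
      have : d₂ = 1 :=
        Nat.Coprime.eq_one_of_dvd
          (Nat.Coprime.pow_right _ (Nat.coprime_comm.mp
            ((Nat.prime_two.coprime_iff_not_dvd).mpr hd2))) hd2pow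
      exact h1 this
    -- conclude
    obtain ⟨hspos, hgl⟩ := L3 hw_odd hw_pos (hgq.trans hqa) hgpow
    have hmem := hN ⟨k, k + w.totient, hk1, by omega, by omega, rfl⟩
    have hgcd : g ∣ Nat.gcd (2 ^ 2 ^ k + d) (2 ^ 2 ^ (k + w.totient) + d) :=
      Nat.dvd_gcd (hgq.trans hqa) hgl
    have hpos : 0 < Nat.gcd (2 ^ 2 ^ k + d) (2 ^ 2 ^ (k + w.totient) + d) :=
      Nat.gcd_pos_of_pos_left _ (by positivity)
    have hle := Nat.le_of_dvd hpos hgcd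
    omega
end

section
/- Let d > 1 be an integer that is not a power of 2. Then for every positive integer m there exist distinct positive integers k, l with gcd(2^{2^k} + d, 2^{2^l} + d) > m. -/
private lemma two_pow_mod_iff (n x : ℕ) : (2 : ZMod n) ^ x = 1 ↔ n ∣ 2 ^ x - 1 := by
  have h1 : (1:ℕ) ≤ 2 ^ x := Nat.one_le_two_pow
  rw [← Nat.modEq_iff_dvd' h1, ← ZMod.natCast_eq_natCast_iff]
  push_cast
  exact eq_comm

private lemma ord_two_dvd_iff (n x : ℕ) : orderOf (2 : ZMod n) ∣ x ↔ n ∣ 2 ^ x - 1 := by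
  rw [orderOf_dvd_iff_pow_eq_one, two_pow_mod_iff]

private lemma pow_sub_one_dvd_helper {X Y : ℕ} (h : X ∣ Y) : 2 ^ X - 1 ∣ 2 ^ Y - 1 := by
  obtain ⟨w, rfl⟩ := h
  have := Nat.sub_dvd_pow_sub_pow (2 ^ X) 1 w
  simpa [← pow_mul] using this

private lemma modeq_one_of_primes (n : ℕ) : ∀ N : ℕ, N ≠ 0 →
    (∀ q : ℕ, q.Prime → q ∣ N → q ≡ 1 [MOD n]) → N ≡ 1 [MOD n] := by
  intro N
  induction N using Nat.strong_induction_on with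
  | _ N ih =>
    intro hN0 hq
    rcases eq_or_ne N 1 with h1 | h1
    · subst h1; rfl
    · obtain ⟨p, hp, hpd⟩ := Nat.exists_prime_and_dvd h1
      obtain ⟨N', rfl⟩ := hpd
      have hN'0 : N' ≠ 0 := by rintro rfl; simp at hN0
      have hlt : N' < p * N' := by
        have h2 := hp.two_le
        have h3 := Nat.pos_of_ne_zero hN'0
        nlinarith
      have hrec := ih N' hlt hN'0 (fun q hq' hd => hq q hq' (hd.mul_left p))
      have hp1 := hq p hp (Dvd.intro N' rfl)
      have := Nat.ModEq.mul hp1 hrec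
      simpa using this

theorem stmt_14 (d : ℕ) (hd : 1 < d) (hpow : ¬ ∃ j : ℕ, d = 2 ^ j) :
    ∀ m : ℕ, 0 < m → ∃ k l : ℕ, 0 < k ∧ 0 < l ∧ k ≠ l ∧
      Nat.gcd (2 ^ 2 ^ k + d) (2 ^ 2 ^ l + d) > m := by
  intro m hm
  have hd0 : d ≠ 0 := by omega
  -- decompose d = 2^a * e with e odd
  obtain ⟨a, e, he2, hde⟩ : ∃ a e : ℕ, ¬ 2 ∣ e ∧ d = 2 ^ a * e :=
    ⟨d.factorization 2, ordCompl[2] d, Nat.not_dvd_ordCompl Nat.prime_two hd0,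
      (Nat.ordProj_mul_ordCompl_eq_self d 2).symm⟩
  have he0 : e ≠ 0 := by rintro rfl; rw [mul_zero] at hde; omega
  have he1 : e ≠ 1 := by rintro rfl; rw [mul_one] at hde; exact hpow ⟨a, hde⟩
  have hcop2e : Nat.Coprime 2 e := (Nat.prime_two.coprime_iff_not_dvd).mpr he2
  -- choose k
  obtain ⟨k, hk⟩ : ∃ k : ℕ, k = a + e + m + 1 := ⟨_, rfl⟩
  have hbig : a + e + m < 2 ^ (a + e + m) := Nat.lt_two_pow_self
  have hpow2 : 2 ^ k = 2 * 2 ^ (a + e + m) := by rw [hk, pow_succ, mul_comm]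
  have h2k : a + k + 1 ≤ 2 ^ k := by omega
  have hk2 : 2 ^ (k+1) = 2 * 2 ^ k := by rw [pow_succ, mul_comm]
  have hm2 : m < 2 ^ (k+1) := by omega
  have he2k : e < 2 ^ (k+1) := by omega
  obtain ⟨x, hx⟩ : ∃ x : ℕ, x = 2 ^ k - a := ⟨_, rfl⟩
  have hxk : k + 1 ≤ x := by omega
  have hax : a + x = 2 ^ k := by omega
  obtain ⟨M, hM⟩ : ∃ M : ℕ, M = 2 ^ x + e := ⟨_, rfl⟩
  have h2x2 : 2 ≤ 2 ^ x := by
    calc (2:ℕ) = 2 ^ 1 := (pow_one 2).symm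
    _ ≤ 2 ^ x := Nat.pow_le_pow_right (by norm_num) (by omega)
  have hM1 : 1 < M := by omega
  have hM0 : M ≠ 0 := by omega
  haveI : NeZero M := ⟨hM0⟩
  have hModd : ¬ 2 ∣ M := by
    intro h
    have h2xd : 2 ∣ 2 ^ x := dvd_pow_self 2 (by omega)
    rw [hM] at h
    exact he2 ((Nat.dvd_add_right h2xd).mp h)
  have hcop2M : Nat.Coprime 2 M := (Nat.prime_two.coprime_iff_not_dvd).mpr hModd
  -- order of 2 mod M
  obtain ⟨t, ht⟩ : ∃ t : ℕ, t = orderOf (2 : ZMod M) := ⟨_, rfl⟩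
  have heulerM : M ∣ 2 ^ Nat.totient M - 1 :=
    (Nat.modEq_iff_dvd' Nat.one_le_two_pow).mp (Nat.ModEq.pow_totient hcop2M).symm
  have htpos : 0 < t := by
    rw [ht]
    have hfin : IsOfFinOrder (2 : ZMod M) :=
      isOfFinOrder_iff_pow_eq_one.mpr
        ⟨Nat.totient M, Nat.totient_pos.mpr (by omega), (two_pow_mod_iff M _).mpr heulerM⟩
    exact hfin.orderOf_pos
  have hMt : M ∣ 2 ^ t - 1 := by
    rw [ht]
    exact (two_pow_mod_iff M _).mp (pow_orderOf_eq_one _)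
  obtain ⟨s, hs⟩ : ∃ s : ℕ, s = t.factorization 2 := ⟨_, rfl⟩
  obtain ⟨u, hu⟩ : ∃ u : ℕ, u = ordCompl[2] t := ⟨_, rfl⟩
  have htu : 2 ^ s * u = t := by rw [hs, hu]; exact Nat.ordProj_mul_ordCompl_eq_self t 2
  have hu_odd : ¬ 2 ∣ u := by rw [hu]; exact Nat.not_dvd_ordCompl Nat.prime_two htpos.ne'
  have hu_pos : 0 < u := by rw [hu]; exact Nat.ordCompl_pos 2 htpos.ne'
  -- the good divisor S
  obtain ⟨S, hS⟩ : ∃ S : ℕ, S = Nat.gcd M (2 ^ (2 ^ k * u) - 1) := ⟨_, rfl⟩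
  have hSM : S ∣ M := hS ▸ Nat.gcd_dvd_left _ _
  have hSr : S ∣ 2 ^ (2 ^ k * u) - 1 := hS ▸ Nat.gcd_dvd_right _ _
  have hSMcopy := hSM
  obtain ⟨C, hMC⟩ : ∃ C, M = S * C := hSMcopy
  have hC0 : C ≠ 0 := by rintro rfl; rw [mul_zero] at hMC; omega
  -- every prime of C is 1 mod 2^(k+1)
  have hCprime : ∀ q : ℕ, q.Prime → q ∣ C → q ≡ 1 [MOD 2 ^ (k+1)] := by
    intro q hq hqC
    have hqM : q ∣ M := hMC ▸ (hqC.mul_left S)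
    have hq2 : q ≠ 2 := by rintro rfl; exact hModd hqM
    have hqodd : ¬ 2 ∣ q := fun h =>
      hq2 ((Nat.prime_dvd_prime_iff_eq Nat.prime_two hq).mp h).symm
    obtain ⟨γ, hγ⟩ : ∃ γ : ℕ, γ = M.factorization q := ⟨_, rfl⟩
    have hγpos : 0 < γ := hγ ▸ hq.factorization_pos_of_dvd hM0 hqM
    obtain ⟨Q, hQdef⟩ : ∃ Q : ℕ, Q = q ^ γ := ⟨_, rfl⟩
    have hQM : Q ∣ M := by rw [hQdef, hγ]; exact Nat.ordProj_dvd M q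
    have hQ1 : 1 < Q := by rw [hQdef]; exact Nat.one_lt_pow (by omega) hq.two_le
    obtain ⟨tQ, htQ⟩ : ∃ tQ : ℕ, tQ = orderOf (2 : ZMod Q) := ⟨_, rfl⟩
    have hQt : Q ∣ 2 ^ t - 1 := hQM.trans hMt
    have htQt : tQ ∣ t := by rw [htQ]; exact (ord_two_dvd_iff Q t).mpr hQt
    have htQ0 : tQ ≠ 0 := by
      intro h0; rw [h0] at htQt; exact htpos.ne' (zero_dvd_iff.mp htQt)
    by_cases hsQ : tQ.factorization 2 ≤ k
    · -- then Q ∣ S, contradicting q ∣ C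
      exfalso
      have htQu : 2 ^ tQ.factorization 2 * ordCompl[2] tQ = tQ :=
        Nat.ordProj_mul_ordCompl_eq_self tQ 2
      have huQodd : ¬ 2 ∣ ordCompl[2] tQ := Nat.not_dvd_ordCompl Nat.prime_two htQ0
      have hcopuQ2 : Nat.Coprime (ordCompl[2] tQ) (2 ^ s) :=
        (((Nat.prime_two.coprime_iff_not_dvd).mpr huQodd).symm).pow_right s
      have huQt : ordCompl[2] tQ ∣ t := (Dvd.intro_left _ htQu).trans htQt
      have huQu : ordCompl[2] tQ ∣ u := by
        rw [← htu] at huQt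
        exact hcopuQ2.dvd_of_dvd_mul_left huQt
      have hcopQ : Nat.Coprime (2 ^ tQ.factorization 2) (ordCompl[2] tQ) :=
        ((Nat.prime_two.coprime_iff_not_dvd).mpr huQodd).pow_left _
      have htQdvd : tQ ∣ 2 ^ k * u := by
        rw [← htQu]
        exact hcopQ.mul_dvd_of_dvd_of_dvd
          ((pow_dvd_pow 2 hsQ).trans (dvd_mul_right _ _))
          (huQu.trans (dvd_mul_left _ _))
      have hQS : Q ∣ S := by
        rw [hS]
        refine Nat.dvd_gcd hQM ?_
        rw [← ord_two_dvd_iff, ← htQ]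
        exact htQdvd
      have hq1 : q ^ (γ + 1) ∣ M := by
        rw [hMC, pow_succ, ← hQdef]
        exact mul_dvd_mul hQS hqC
      have := (hq.pow_dvd_iff_le_factorization hM0).mp hq1
      omega
    · -- all orders have big 2-part: q ≡ 1 mod 2^(k+1)
      push_neg at hsQ
      haveI : NeZero Q := ⟨by omega⟩
      have hcop2Q : Nat.Coprime 2 Q := (Nat.prime_two.coprime_iff_not_dvd).mpr
        (fun h => hqodd (by rw [hQdef] at h; exact Nat.prime_two.dvd_of_dvd_pow h))
      have heulerQ : Q ∣ 2 ^ Nat.totient Q - 1 :=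
        (Nat.modEq_iff_dvd' Nat.one_le_two_pow).mp (Nat.ModEq.pow_totient hcop2Q).symm
      have htQtot : tQ ∣ Nat.totient Q := by
        rw [htQ]; exact (ord_two_dvd_iff Q _).mpr heulerQ
      have h1 : (2:ℕ) ^ (k+1) ∣ tQ :=
        (pow_dvd_pow 2 (by omega)).trans (Nat.ordProj_dvd tQ 2)
      have h2 : (2:ℕ) ^ (k+1) ∣ q ^ (γ - 1) * (q - 1) := by
        rw [← Nat.totient_prime_pow hq hγpos, ← hQdef]
        exact h1.trans htQtot
      have hcop' : Nat.Coprime (2 ^ (k+1)) (q ^ (γ - 1)) :=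
        Nat.Coprime.pow _ _ ((Nat.prime_two.coprime_iff_not_dvd).mpr hqodd)
      have h3 : (2:ℕ) ^ (k+1) ∣ q - 1 := hcop'.dvd_of_dvd_mul_left h2
      exact ((Nat.modEq_iff_dvd' hq.one_lt.le).mpr h3).symm
  have hCmod : C ≡ 1 [MOD 2 ^ (k+1)] := modeq_one_of_primes _ C hC0 hCprime
  have hMmod : M ≡ e [MOD 2 ^ (k+1)] := by
    have hdvd : (2:ℕ) ^ (k+1) ∣ 2 ^ x := pow_dvd_pow 2 (by omega)
    calc M = 2 ^ x + e := hM
    _ ≡ 0 + e [MOD 2 ^ (k+1)] := (Nat.modEq_zero_iff_dvd.mpr hdvd).add_right e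
    _ = e := by omega
  have hSmod : S ≡ e [MOD 2 ^ (k+1)] := by
    have h1 : S * 1 ≡ S * C [MOD 2 ^ (k+1)] := Nat.ModEq.mul_left S hCmod.symm
    rw [mul_one] at h1
    exact h1.trans (hMC ▸ hMmod : S * C ≡ e [MOD 2 ^ (k+1)])
  have hcopMe : Nat.Coprime M e := by
    have h1 : Nat.Coprime (2 ^ x) e := hcop2e.pow_left _
    have h2 : Nat.Coprime (2 ^ x + e * 1) e := (Nat.coprime_add_mul_left_left _ _ _).mpr h1
    rw [mul_one, ← hM] at h2
    exact h2
  have hSne : S ≠ e := by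
    intro hSe
    have hedvd : e ∣ M := hSe ▸ hSM
    have : e ∣ 1 := hcopMe ▸ Nat.dvd_gcd hedvd dvd_rfl
    exact he1 (Nat.dvd_one.mp this)
  have hSm : m < S := by
    by_contra hle
    push_neg at hle
    have hS_lt : S < 2 ^ (k+1) := by omega
    have hmm := hSmod
    rw [Nat.ModEq, Nat.mod_eq_of_lt hS_lt, Nat.mod_eq_of_lt he2k] at hmm
    exact hSne hmm
  -- choose l
  obtain ⟨c, hc⟩ : ∃ c : ℕ, c = Nat.totient u := ⟨_, rfl⟩
  have hcpos : 0 < c := hc ▸ Nat.totient_pos.mpr hu_pos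
  obtain ⟨l, hl⟩ : ∃ l : ℕ, l = k + c := ⟨_, rfl⟩
  have hcop2u : Nat.Coprime 2 u := (Nat.prime_two.coprime_iff_not_dvd).mpr hu_odd
  have hu_dvd : u ∣ 2 ^ c - 1 := by
    rw [hc]
    exact (Nat.modEq_iff_dvd' Nat.one_le_two_pow).mp (Nat.ModEq.pow_totient hcop2u).symm
  have hexp : 2 ^ k * u ∣ 2 ^ l - 2 ^ k := by
    have h1 : 2 ^ l - 2 ^ k = 2 ^ k * (2 ^ c - 1) := by
      rw [hl, pow_add, Nat.mul_sub, mul_one]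
    rw [h1]
    exact mul_dvd_mul_left (2 ^ k) hu_dvd
  have hS2 : S ∣ 2 ^ (2 ^ l - 2 ^ k) - 1 := hSr.trans (pow_sub_one_dvd_helper hexp)
  have hMak : 2 ^ 2 ^ k + d = 2 ^ a * M := by
    rw [hM, Nat.mul_add, ← pow_add, hax, ← hde]
  have hSak : S ∣ 2 ^ 2 ^ k + d := by
    rw [hMak]
    exact hSM.trans (dvd_mul_left M (2 ^ a))
  have hkl : 2 ^ k ≤ 2 ^ l := Nat.pow_le_pow_right (by norm_num) (by omega)
  have hal : 2 ^ 2 ^ l + d = 2 ^ 2 ^ k * (2 ^ (2 ^ l - 2 ^ k) - 1) + (2 ^ 2 ^ k + d) := by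
    have h1 : 2 ^ 2 ^ l = 2 ^ 2 ^ k * 2 ^ (2 ^ l - 2 ^ k) := by
      rw [← pow_add]
      congr 1
      omega
    have h2 : 2 ^ 2 ^ k * 1 ≤ 2 ^ 2 ^ k * 2 ^ (2 ^ l - 2 ^ k) :=
      Nat.mul_le_mul_left _ Nat.one_le_two_pow
    rw [h1, Nat.mul_sub, mul_one]
    omega
  have hSal : S ∣ 2 ^ 2 ^ l + d := by
    rw [hal]
    exact dvd_add (hS2.mul_left _) hSak
  refine ⟨k, l, by omega, by omega, by omega, ?_⟩
  have hgcd : S ∣ Nat.gcd (2 ^ 2 ^ k + d) (2 ^ 2 ^ l + d) := Nat.dvd_gcd hSak hSal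
  have hpos : 0 < Nat.gcd (2 ^ 2 ^ k + d) (2 ^ 2 ^ l + d) :=
    Nat.gcd_pos_of_pos_left _ (by positivity)
  calc m < S := hSm
  _ ≤ Nat.gcd (2 ^ 2 ^ k + d) (2 ^ 2 ^ l + d) := Nat.le_of_dvd hpos hgcd
end

section
/- Let k ≥ 1 and n > ν₂(k). Then there exist infinitely many positive integers l > n such that 2^{2^n} + 2^k divides 2^{2^l} + 2^k. -/
private lemma aux_pow_dvd (a q : ℕ) (hq : Odd q) : 2 ^ a + 1 ∣ 2 ^ (a * q) + 1 := by
  have h := Odd.nat_add_dvd_pow_add_pow (2 ^ a) 1 hq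
  simpa [pow_mul] using h

theorem stmt_15 (k n : ℕ) (hk : 1 ≤ k) (hn : padicValNat 2 k < n) :
    {l : ℕ | l > n ∧ (2 ^ 2 ^ n + 2 ^ k) ∣ (2 ^ 2 ^ l + 2 ^ k)}.Infinite := by
  have hk0 : k ≠ 0 := by omega
  set v := padicValNat 2 k with hv
  obtain ⟨u, hku⟩ : 2 ^ v ∣ k := pow_padicValNat_dvd
  have hu_odd : u % 2 = 1 := by
    rcases Nat.even_or_odd u with he | ho
    · exfalso
      obtain ⟨c, hc⟩ := he
      have : 2 ^ (v + 1) ∣ k := ⟨c, by rw [hku, hc]; ring⟩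
      exact (pow_succ_padicValNat_not_dvd hk0) this
    · exact Nat.odd_iff.mp ho
  set N := 2 ^ (n - v - 1) with hNdef
  have hNpos : 1 ≤ N := Nat.one_le_two_pow
  have h2n : 2 ^ n = 2 ^ v * (2 * N) := by
    rw [hNdef, ← pow_succ', ← pow_add]
    congr 1
    omega
  obtain ⟨m, hm_odd, hDcase⟩ :
      ∃ m, m % 2 = 1 ∧ (k + 2 ^ v * m = 2 ^ n ∨ 2 ^ n + 2 ^ v * m = k) := by
    have hne : u ≠ 2 * N := by omega
    rcases lt_or_ge u (2 * N) with hlt | hge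
    · refine ⟨2 * N - u, by omega, Or.inl ?_⟩
      have hsum : u + (2 * N - u) = 2 * N := by omega
      rw [hku, ← Nat.mul_add, hsum, h2n]
    · have hgt : 2 * N < u := by omega
      refine ⟨u - 2 * N, by omega, Or.inr ?_⟩
      have hsum : 2 * N + (u - 2 * N) = u := by omega
      rw [hku, h2n, ← Nat.mul_add, hsum]
  have hmpos : 1 ≤ m := by omega
  set D := 2 ^ v * m with hDdef
  have hDpos : 1 ≤ D := Nat.mul_pos (pow_pos (by norm_num) v) hmpos
  set φ := m.totient with hφdef
  have hφpos : 1 ≤ φ := Nat.totient_pos.mpr hmpos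
  have hcop : Nat.Coprime 2 m := Nat.coprime_two_left.mpr (Nat.odd_iff.mpr hm_odd)
  have hml : ∀ e : ℕ, m ∣ 2 ^ (e * φ) - 1 := by
    intro e
    have h1 : 2 ^ φ ≡ 1 [MOD m] := Nat.ModEq.pow_totient hcop
    have h2 : (2 ^ φ) ^ e ≡ 1 ^ e [MOD m] := h1.pow e
    rw [one_pow, ← pow_mul, mul_comm φ e] at h2
    exact (Nat.modEq_iff_dvd' Nat.one_le_two_pow).mp h2.symm
  apply Set.infinite_of_injective_forall_mem
    (f := fun t : ℕ => n + (t + k + 1) * φ)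
  · intro a b hab
    simp only at hab
    have h1 : (a + k + 1) * φ = (b + k + 1) * φ := by omega
    have := Nat.eq_of_mul_eq_mul_right hφpos h1
    omega
  · intro t
    set d := (t + k + 1) * φ with hddef
    set l := n + d with hldef
    have hd1 : 1 ≤ d := Nat.one_le_iff_ne_zero.mpr (by positivity)
    have hdk : k + 1 ≤ d := by
      calc k + 1 ≤ (t + k + 1) * 1 := by omega
        _ ≤ (t + k + 1) * φ := Nat.mul_le_mul_left _ hφpos
    obtain ⟨w, hw'⟩ := hml (t + k + 1)
    have hw : 2 ^ d - 1 = m * w := hw'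
    have h2dpos : 1 ≤ 2 ^ d := Nat.one_le_two_pow
    have h2d : 2 ^ d = m * w + 1 := by omega
    have hd2 : 2 ≤ 2 ^ d := by
      calc 2 = 2 ^ 1 := rfl
        _ ≤ 2 ^ d := Nat.pow_le_pow_right (by norm_num) hd1
    have hwpos : 1 ≤ w := by
      rcases Nat.eq_zero_or_pos w with h0 | h; · subst h0; simp at h2d; omega
      exact h
    set c := N * w with hcdef
    have hcpos : 1 ≤ c := Nat.mul_pos hNpos hwpos
    have hLK : 2 ^ l = 2 ^ n + D * (2 * c) := by
      calc 2 ^ l = 2 ^ n * 2 ^ d := by rw [hldef, pow_add]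
        _ = 2 ^ n * (m * w + 1) := by rw [h2d]
        _ = 2 ^ n + D * (2 * c) := by rw [h2n, hDdef, hcdef]; ring
    have hkl : k < 2 ^ l := by
      calc k < 2 ^ k := Nat.lt_two_pow_self
        _ ≤ 2 ^ l := Nat.pow_le_pow_right (by norm_num) (by omega)
    refine ⟨by omega, ?_⟩
    rcases hDcase with hA | hB
    · -- k < 2^n case
      have hb : 2 ^ l = k + D * (2 * c + 1) := by rw [hLK, ← hA]; ring
      have e1 : 2 ^ 2 ^ n + 2 ^ k = 2 ^ k * (2 ^ D + 1) := by
        rw [← hA, pow_add]; ring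
      have e2 : 2 ^ 2 ^ l + 2 ^ k = 2 ^ k * (2 ^ (D * (2 * c + 1)) + 1) := by
        rw [hb, pow_add]; ring
      rw [e1, e2]
      exact mul_dvd_mul_left _ (aux_pow_dvd D _ ⟨c, by ring⟩)
    · -- k > 2^n case
      set q := 2 * c - 1 with hqdef
      have hq1 : q + 1 = 2 * c := by omega
      have hq_odd : Odd q := ⟨c - 1, by omega⟩
      have hb : 2 ^ l = k + D * q := by
        rw [hLK, ← hB, show 2 * c = q + 1 from hq1.symm]; ring
      have e1 : 2 ^ 2 ^ n + 2 ^ k = 2 ^ 2 ^ n * (1 + 2 ^ D) := by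
        rw [← hB, pow_add]; ring
      have e2 : 2 ^ 2 ^ l + 2 ^ k = 2 ^ 2 ^ n * (2 ^ D * (2 ^ (D * q) + 1)) := by
        rw [hb, ← hB, pow_add, pow_add]; ring
      rw [e1, e2]
      refine mul_dvd_mul_left _ ?_
      have hdq : (1 + 2 ^ D) ∣ (2 ^ (D * q) + 1) := by
        simpa [add_comm] using aux_pow_dvd D q hq_odd
      exact hdq.mul_left (2 ^ D)
end

section
/- For any prime p and positive integer n such that p ≡ 1 (mod 2^n) fails and p is odd, and any integer d, if p divides 2^{2^n} + d then there exists l > n with p dividing 2^{2^l} + d. -/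
theorem stmt_17 (p n : ℕ) (hp : p.Prime) (hodd : Odd p) (hn : 0 < n)
    (h : ¬ (2 ^ n ∣ p - 1)) (d : ℤ)
    (hdvd : (p : ℤ) ∣ 2 ^ 2 ^ n + d) :
    ∃ l : ℕ, l > n ∧ (p : ℤ) ∣ 2 ^ 2 ^ l + d := by
  haveI : Fact p.Prime := ⟨hp⟩
  have hp3 : 3 ≤ p := by
    have := hp.two_le
    rcases hodd with ⟨k, hk⟩
    omega
  have h2ne : (2 : ZMod p) ≠ 0 := by
    intro hc
    have h2 : ((2 : ℕ) : ZMod p) = 0 := by push_cast; exact hc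
    have := Nat.le_of_dvd (by norm_num) ((ZMod.natCast_eq_zero_iff 2 p).mp h2)
    omega
  set o := orderOf (2 : ZMod p) with ho
  have hpow : (2 : ZMod p) ^ (p - 1) = 1 := ZMod.pow_card_sub_one_eq_one h2ne
  have hodvd : o ∣ p - 1 := orderOf_dvd_of_pow_eq_one hpow
  have hone : o ≠ 0 := by
    intro hc; rw [hc] at hodvd; have := Nat.eq_zero_of_zero_dvd hodvd; omega
  set a := o.factorization 2 with ha
  set m := o / 2 ^ a with hm
  have hom : 2 ^ a * m = o := Nat.ordProj_mul_ordCompl_eq_self o 2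
  have hmodd : ¬ 2 ∣ m := Nat.not_dvd_ordCompl Nat.prime_two hone
  have hmpos : 0 < m := by
    rcases Nat.eq_zero_or_pos m with h0 | h0
    · rw [h0, mul_zero] at hom; omega
    · exact h0
  have haltn : a < n := by
    by_contra hc
    push_neg at hc
    exact h ((pow_dvd_pow 2 hc).trans ((Nat.ordProj_dvd o 2).trans hodvd))
  have hcop : Nat.Coprime 2 m := (Nat.Prime.coprime_iff_not_dvd Nat.prime_two).mpr hmodd
  set t := m.totient with ht
  have htpos : 0 < t := Nat.totient_pos.mpr hmpos
  refine ⟨n + t, by omega, ?_⟩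
  -- key: o ∣ 2^(n+t) - 2^n
  have hkey : o ∣ 2 ^ (n + t) - 2 ^ n := by
    have hmdvd : m ∣ 2 ^ t - 1 := by
      have := Nat.ModEq.pow_totient hcop
      exact (Nat.modEq_iff_dvd' (Nat.one_le_two_pow)).mp this.symm
    have h2a : (2 : ℕ) ^ a ∣ 2 ^ n := pow_dvd_pow 2 haltn.le
    have : 2 ^ a * m ∣ 2 ^ n * (2 ^ t - 1) := mul_dvd_mul h2a hmdvd
    rw [hom] at this
    have heq : 2 ^ n * (2 ^ t - 1) = 2 ^ (n + t) - 2 ^ n := by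
      rw [Nat.mul_sub, mul_one, pow_add]
    rwa [heq] at this
  have hle : (2 : ℕ) ^ n ≤ 2 ^ (n + t) := Nat.pow_le_pow_right (by norm_num) (by omega)
  obtain ⟨c, hc⟩ := hkey
  have hexp : 2 ^ (n + t) = 2 ^ n + o * c := by omega
  have hzeq : (2 : ZMod p) ^ 2 ^ (n + t) = 2 ^ 2 ^ n := by
    rw [hexp, pow_add, pow_mul, pow_orderOf_eq_one, one_pow, mul_one]
  have hintd : (p : ℤ) ∣ 2 ^ 2 ^ (n + t) - 2 ^ 2 ^ n := by
    have : ((2 ^ 2 ^ (n + t) - 2 ^ 2 ^ n : ℤ) : ZMod p) = 0 := by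
      push_cast
      rw [hzeq]; ring
    exact (ZMod.intCast_zmod_eq_zero_iff_dvd _ p).mp this
  have := dvd_add hintd hdvd
  have heq2 : 2 ^ 2 ^ (n + t) - 2 ^ 2 ^ n + (2 ^ 2 ^ n + d) = (2 : ℤ) ^ 2 ^ (n + t) + d := by ring
  rwa [heq2] at this
end
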